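/- arXiv:1903.05764 — 6 statements merged into one kernel-verified Lean document; each statement's English description precedes it below -/
import Mathlib

section
/- Fix an integer m ≥ 1 and a real ε > 0. Let γ_m = 1 + e^{-1}·∑_{j=0}^{m} 1/j! − log 2 and c_m = 1 − 1.5/(1 + (m+1)·γ_m). Then there exists a constant C > 0 such that for all n ≥ 2, the probability that B_{n,m} is not connected is at most C·n^{−c_m+ε}. -/
/-- Sample space: quadruples `ω = (f₁, f₂, g₁, g₂)` of functions `Fin n → Fin n`.
`f₁ i` (`f₂ i`) is the first-round (second-round) selection of row `i`;
`g₁ j` (`g₂ j`) is the first-round (second-round) selection of column `j`. -/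
abbrev Omega (n : ℕ) :=
  (Fin n → Fin n) × (Fin n → Fin n) × (Fin n → Fin n) × (Fin n → Fin n)

/-- Row `i` is unpopular: it was chosen by at most `m` columns in the first round. -/
def RowUnpopular (n m : ℕ) (ω : Omega n) (i : Fin n) : Prop :=
  (Finset.univ.filter fun j => ω.2.2.1 j = i).card ≤ m

/-- Column `j` is unpopular: it was chosen by at most `m` rows in the first round. -/
def ColUnpopular (n m : ℕ) (ω : Omega n) (j : Fin n) : Prop :=
  (Finset.univ.filter fun i => ω.1 i = j).card ≤ m

/-- `(i, j)` is an edge of `B_{n,m}(ω)`. -/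
def IsEdge (n m : ℕ) (ω : Omega n) (i j : Fin n) : Prop :=
  ω.1 i = j ∨ ω.2.2.1 j = i ∨ (RowUnpopular n m ω i ∧ ω.2.1 i = j) ∨
    (ColUnpopular n m ω j ∧ ω.2.2.2 j = i)

/-- `B_{n,m}(ω)` has a perfect matching. -/
def HasPerfectMatching (n m : ℕ) (ω : Omega n) : Prop :=
  ∃ π : Fin n ≃ Fin n, ∀ i, IsEdge n m ω i (π i)

open Classical in
/-- Probability of an event under the uniform measure on `Omega n`. -/
noncomputable def pr (n : ℕ) (P : Omega n → Prop) : ℝ :=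
  ((Finset.univ.filter fun ω : Omega n => P ω).card : ℝ) / (Fintype.card (Omega n) : ℝ)
/-- The bipartite graph `B_{n,m}(ω)` on the disjoint union `V₁ ⊔ V₂`. -/
def BGraph (n m : ℕ) (ω : Omega n) : SimpleGraph (Fin n ⊕ Fin n) where
  Adj u v :=
    match u, v with
    | Sum.inl i, Sum.inr j => IsEdge n m ω i j
    | Sum.inr j, Sum.inl i => IsEdge n m ω i j
    | _, _ => False
  symm := ⟨by rintro (i | i) (j | j) h <;> exact h⟩
  loopless := ⟨by rintro (i | i) h <;> exact h⟩
/-- `γ_m = 1 + e⁻¹ · ∑_{j=0}^m 1/j! − log 2`. -/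
noncomputable def gammaConst (m : ℕ) : ℝ :=
  1 + (Real.exp 1)⁻¹ * ∑ j ∈ Finset.range (m + 1), (1 : ℝ) / (Nat.factorial j) - Real.log 2

/-- `c_m = 1 − 1.5/(1 + (m+1)·γ_m)`. -/
noncomputable def cConst (m : ℕ) : ℝ :=
  1 - 1.5 / (1 + ((m : ℝ) + 1) * gammaConst m)

open Finset

-- union bound
lemma pr_le_sum {n : ℕ} {ι : Type*} [DecidableEq ι] (P : Omega n → Prop) (s : Finset ι)
    (Q : ι → Omega n → Prop) (h : ∀ ω, P ω → ∃ x ∈ s, Q x ω) :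
    pr n P ≤ ∑ x ∈ s, pr n (Q x) := by
  classical
  unfold pr
  rw [← Finset.sum_div]
  gcongr
  have hsub : (Finset.univ.filter fun ω : Omega n => P ω) ⊆
      s.biUnion fun x => Finset.univ.filter fun ω : Omega n => Q x ω := by
    intro ω hω
    rw [Finset.mem_filter] at hω
    obtain ⟨x, hx, hq⟩ := h ω hω.2
    exact Finset.mem_biUnion.2 ⟨x, hx, Finset.mem_filter.2 ⟨Finset.mem_univ _, hq⟩⟩
  calc ((Finset.univ.filter fun ω : Omega n => P ω).card : ℝ)
      ≤ ((s.biUnion fun x => Finset.univ.filter fun ω : Omega n => Q x ω).card : ℝ) := by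
        exact_mod_cast Finset.card_le_card hsub
    _ ≤ ∑ x ∈ s, ((Finset.univ.filter fun ω : Omega n => Q x ω).card : ℝ) := by
        exact_mod_cast Finset.card_biUnion_le

lemma pr_nonneg {n : ℕ} (P : Omega n → Prop) : 0 ≤ pr n P := by
  unfold pr; positivity

example : True := trivial
/-- The event, on a pair of functions `(g, h)`, that `g` respects the cut `(S, T)`
(columns `T` pick into `S`, others outside) and the second-round function `h`
also respects it on unpopular vertices. -/
def Epair (n m : ℕ) (S T : Finset (Fin n)) (p : (Fin n → Fin n) × (Fin n → Fin n)) : Prop :=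
  (∀ j, j ∈ T ↔ p.1 j ∈ S) ∧
    ∀ i, (Finset.univ.filter fun j => p.1 j = i).card ≤ m → (i ∈ S ↔ p.2 i ∈ T)

/-- The event that `(A, B)` is a union of connected components of `B_{n,m}(ω)`. -/
def Cut (n m : ℕ) (A B : Finset (Fin n)) (ω : Omega n) : Prop :=
  Epair n m A B (ω.2.2.1, ω.2.1) ∧ Epair n m B A (ω.1, ω.2.2.2)

lemma exists_cut {n m : ℕ} (hn : 2 ≤ n) (ω : Omega n)
    (h : ¬ (BGraph n m ω).Connected) :
    ∃ p : Finset (Fin n) × Finset (Fin n),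
      p ∈ (Finset.univ.filter fun A : Finset (Fin n) => A.Nonempty ∧ A ≠ Finset.univ) ×ˢ
          (Finset.univ.filter fun B : Finset (Fin n) => B.Nonempty ∧ B ≠ Finset.univ) ∧
        Cut n m p.1 p.2 ω := by
  classical
  have hne : Nonempty (Fin n ⊕ Fin n) := ⟨Sum.inl ⟨0, by omega⟩⟩
  have hpre : ¬ (BGraph n m ω).Preconnected := fun hp => h ⟨hp⟩
  rw [SimpleGraph.Preconnected] at hpre
  push_neg at hpre
  obtain ⟨v, w, hvw⟩ := hpre
  set G := BGraph n m ω with hG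
  let A : Finset (Fin n) := Finset.univ.filter fun i => G.Reachable v (Sum.inl i)
  let B : Finset (Fin n) := Finset.univ.filter fun j => G.Reachable v (Sum.inr j)
  have adj1 : ∀ i, G.Adj (Sum.inl i) (Sum.inr (ω.1 i)) := fun i => Or.inl rfl
  have adj2 : ∀ j, G.Adj (Sum.inl (ω.2.2.1 j)) (Sum.inr j) := fun j => Or.inr (Or.inl rfl)
  have adj3 : ∀ i, RowUnpopular n m ω i → G.Adj (Sum.inl i) (Sum.inr (ω.2.1 i)) :=
    fun i hu => Or.inr (Or.inr (Or.inl ⟨hu, rfl⟩))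
  have adj4 : ∀ j, ColUnpopular n m ω j → G.Adj (Sum.inl (ω.2.2.2 j)) (Sum.inr j) :=
    fun j hu => Or.inr (Or.inr (Or.inr ⟨hu, rfl⟩))
  have memA : ∀ i, i ∈ A ↔ G.Reachable v (Sum.inl i) := by
    intro i; simp [A]
  have memB : ∀ j, j ∈ B ↔ G.Reachable v (Sum.inr j) := by
    intro j; simp [B]
  have step : ∀ {x : Fin n ⊕ Fin n} {y : Fin n ⊕ Fin n}, G.Adj x y →
      (G.Reachable v x ↔ G.Reachable v y) :=
    fun hxy => ⟨fun hr => hr.trans hxy.reachable, fun hr => hr.trans hxy.symm.reachable⟩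
  have hf1 : ∀ i, i ∈ A ↔ ω.1 i ∈ B := by
    intro i; rw [memA, memB]; exact step (adj1 i)
  have hg1 : ∀ j, j ∈ B ↔ ω.2.2.1 j ∈ A := by
    intro j; rw [memA, memB]; exact (step (adj2 j)).symm
  have hf2 : ∀ i, RowUnpopular n m ω i → (i ∈ A ↔ ω.2.1 i ∈ B) := by
    intro i hu; rw [memA, memB]; exact step (adj3 i hu)
  have hg2 : ∀ j, ColUnpopular n m ω j → (j ∈ B ↔ ω.2.2.2 j ∈ A) := by
    intro j hu; rw [memA, memB]; exact (step (adj4 j hu)).symm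
  have hv : A.Nonempty ∧ B.Nonempty := by
    rcases v with i | j
    · have hiA : i ∈ A := (memA i).2 (SimpleGraph.Reachable.refl _)
      exact ⟨⟨i, hiA⟩, ⟨ω.1 i, (hf1 i).1 hiA⟩⟩
    · have hjB : j ∈ B := (memB j).2 (SimpleGraph.Reachable.refl _)
      exact ⟨⟨ω.2.2.1 j, (hg1 j).1 hjB⟩, ⟨j, hjB⟩⟩
  have hw : A ≠ Finset.univ ∧ B ≠ Finset.univ := by
    rcases w with i | j
    · have hiA : i ∉ A := fun hi => hvw ((memA i).1 hi)
      refine ⟨fun hA => hiA (hA ▸ Finset.mem_univ i), fun hB => ?_⟩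
      exact ((hf1 i).not.1 hiA) (hB ▸ Finset.mem_univ (ω.1 i))
    · have hjB : j ∉ B := fun hj => hvw ((memB j).1 hj)
      refine ⟨fun hA => ?_, fun hB => hjB (hB ▸ Finset.mem_univ j)⟩
      exact ((hg1 j).not.1 hjB) (hA ▸ Finset.mem_univ (ω.2.2.1 j))
  refine ⟨(A, B), ?_, ?_, ?_⟩
  · simp only [Finset.mem_product, Finset.mem_filter, Finset.mem_univ, true_and]
    exact ⟨⟨hv.1, hw.1⟩, hv.2, hw.2⟩
  · exact ⟨hg1, fun i hu => hf2 i hu⟩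
  · exact ⟨hf1, fun j hu => hg2 j hu⟩

open Finset in
/-- Under a cut, the number of popular vertices in `S` is at most `|T| / 2`. -/
lemma popular_card_le {n m : ℕ} (hm : 1 ≤ m) (S T : Finset (Fin n)) (g : Fin n → Fin n)
    (hg : ∀ j, j ∈ T ↔ g j ∈ S) :
    (S.filter fun i => ¬ (Finset.univ.filter fun j => g j = i).card ≤ m).card ≤ T.card / 2 := by
  classical
  rw [Nat.le_div_iff_mul_le (by norm_num : 0 < 2)]
  have hTsum : T.card = ∑ i ∈ S, (T.filter fun j => g j = i).card :=
    Finset.card_eq_sum_card_fiberwise fun j hj => (hg j).1 hj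
  have hfib : ∀ i ∈ S, (T.filter fun j => g j = i).card
      = (Finset.univ.filter fun j => g j = i).card := by
    intro i hi
    congr 1
    ext j
    simp only [Finset.mem_filter, Finset.mem_univ, true_and, and_iff_right_iff_imp]
    intro hj; exact (hg j).2 (hj ▸ hi)
  have hsum : ∑ i ∈ S, (Finset.univ.filter fun j => g j = i).card = T.card := by
    rw [hTsum]; exact (Finset.sum_congr rfl hfib).symm
  calc (S.filter fun i => ¬ (Finset.univ.filter fun j => g j = i).card ≤ m).card * 2
      = ∑ _i ∈ S.filter fun i => ¬ (Finset.univ.filter fun j => g j = i).card ≤ m, 2 := by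
        rw [Finset.sum_const, smul_eq_mul]
    _ ≤ ∑ i ∈ S.filter fun i => ¬ (Finset.univ.filter fun j => g j = i).card ≤ m,
          (Finset.univ.filter fun j => g j = i).card := by
        apply Finset.sum_le_sum
        intro i hi
        rw [Finset.mem_filter] at hi
        omega
    _ ≤ ∑ i ∈ S, (Finset.univ.filter fun j => g j = i).card :=
        Finset.sum_le_sum_of_subset (Finset.filter_subset _ _)
    _ = T.card := hsum

open Finset in
/-- Count of first-round functions respecting a cut. -/
lemma card_cutfun {n : ℕ} (S T : Finset (Fin n)) :
    (Finset.univ.filter fun g : Fin n → Fin n => ∀ j, j ∈ T ↔ g j ∈ S).card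
      = S.card ^ T.card * (n - S.card) ^ (n - T.card) := by
  classical
  have hset : (Finset.univ.filter fun g : Fin n → Fin n => ∀ j, j ∈ T ↔ g j ∈ S)
      = Fintype.piFinset (fun j => if j ∈ T then S else Sᶜ) := by
    ext g
    simp only [Finset.mem_filter, Finset.mem_univ, true_and, Fintype.mem_piFinset]
    refine ⟨fun h j => ?_, fun h j => ?_⟩
    · by_cases hj : j ∈ T
      · simp [hj, (h j).1 hj]
      · simp only [hj, if_false, Finset.mem_compl]
        exact fun hgs => hj ((h j).2 hgs)
    · have := h j
      by_cases hj : j ∈ T <;> simp [hj] at this <;> simp [hj, this]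
  rw [hset, Fintype.card_piFinset]
  have : ∀ j : Fin n, (if j ∈ T then S else Sᶜ).card = if j ∈ T then S.card else n - S.card := by
    intro j
    split_ifs with hj
    · rfl
    · rw [Finset.card_compl, Fintype.card_fin]
  simp_rw [this]
  rw [← Finset.prod_mul_prod_compl T]
  rw [Finset.prod_congr rfl fun j hj => if_pos hj,
    Finset.prod_congr rfl fun j hj => if_neg (Finset.mem_compl.1 hj)]
  rw [Finset.prod_const, Finset.prod_const, Finset.card_compl, Fintype.card_fin]

/-- Numeric bound for the count of `Epair` pairs. -/
def NE (n s t : ℕ) : ℕ :=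
  s ^ t * (n - s) ^ (n - t) *
    (t ^ (s - t / 2) * (n - t) ^ ((n - s) - (n - t) / 2) *
      n ^ (n - (s - t / 2) - ((n - s) - (n - t) / 2)))

lemma nat_pow_bound {x y n v1 v2 P Q R : ℕ} (hx : x ≤ n) (hy : y ≤ n)
    (h1 : v1 ≤ P) (h2 : v2 ≤ Q) (hs : P + Q + R = n) :
    x ^ P * y ^ Q * n ^ R ≤ x ^ v1 * y ^ v2 * n ^ (n - v1 - v2) := by
  have e1 : x ^ P = x ^ v1 * x ^ (P - v1) := by rw [← pow_add]; congr 1; omega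
  have e2 : y ^ Q = y ^ v2 * y ^ (Q - v2) := by rw [← pow_add]; congr 1; omega
  calc x ^ P * y ^ Q * n ^ R
      = (x ^ v1 * y ^ v2) * (x ^ (P - v1) * y ^ (Q - v2) * n ^ R) := by
        rw [e1, e2]; ring
    _ ≤ (x ^ v1 * y ^ v2) * (n ^ (P - v1) * n ^ (Q - v2) * n ^ R) := by
        apply Nat.mul_le_mul_left
        exact Nat.mul_le_mul (Nat.mul_le_mul (Nat.pow_le_pow_left hx _)
          (Nat.pow_le_pow_left hy _)) le_rfl
    _ = x ^ v1 * y ^ v2 * n ^ (n - v1 - v2) := by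
        have hE : (P - v1) + (Q - v2) + R = n - v1 - v2 := by omega
        rw [← pow_add, ← pow_add, hE, mul_assoc]

open Finset in
/-- Count of second-round functions compatible with a cut, given the first round `g`. -/
lemma card_round2_le {n m : ℕ} (hm : 1 ≤ m) (S T : Finset (Fin n)) (g : Fin n → Fin n)
    (hg : ∀ j, j ∈ T ↔ g j ∈ S) :
    (Finset.univ.filter fun h : Fin n → Fin n =>
        ∀ i, (Finset.univ.filter fun j => g j = i).card ≤ m → (i ∈ S ↔ h i ∈ T)).card
      ≤ T.card ^ (S.card - T.card / 2) * (n - T.card) ^ ((n - S.card) - (n - T.card) / 2) *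
          n ^ (n - (S.card - T.card / 2) - ((n - S.card) - (n - T.card) / 2)) := by
  classical
  set deg : Fin n → ℕ := fun i => (Finset.univ.filter fun j => g j = i).card with hdeg
  have hset : (Finset.univ.filter fun h : Fin n → Fin n =>
        ∀ i, deg i ≤ m → (i ∈ S ↔ h i ∈ T))
      = Fintype.piFinset (fun i => if deg i ≤ m then (if i ∈ S then T else Tᶜ) else
          Finset.univ) := by
    ext h
    simp only [Finset.mem_filter, Finset.mem_univ, true_and, Fintype.mem_piFinset]
    refine ⟨fun hh i => ?_, fun hh i hi => ?_⟩
    · by_cases hu : deg i ≤ m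
      · by_cases hiS : i ∈ S
        · simp [hu, hiS, (hh i hu).1 hiS]
        · simp only [hu, if_true, hiS, if_false, Finset.mem_compl]
          exact fun hT => hiS ((hh i hu).2 hT)
      · simp [hu]
    · have := hh i
      simp only [hi, if_true] at this
      by_cases hiS : i ∈ S
      · simp only [hiS, if_true] at this; simp [hiS, this]
      · simp only [hiS, if_false, Finset.mem_compl] at this
        simp [hiS, this]
  rw [hset, Fintype.card_piFinset]
  -- compute the product
  have hcards : ∀ i : Fin n,
      (if deg i ≤ m then (if i ∈ S then T else Tᶜ) else (Finset.univ : Finset (Fin n))).card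
      = if deg i ≤ m then (if i ∈ S then T.card else n - T.card) else n := by
    intro i
    split_ifs with h1 h2
    · rfl
    · rw [Finset.card_compl, Fintype.card_fin]
    · rw [Finset.card_univ, Fintype.card_fin]
  simp_rw [hcards]
  set P := (S.filter fun i => deg i ≤ m).card with hP
  set Q := (Sᶜ.filter fun i => deg i ≤ m).card with hQ
  set R := (Finset.univ.filter fun i : Fin n => ¬ deg i ≤ m).card with hR
  have hprod : ∏ i : Fin n, (if deg i ≤ m then (if i ∈ S then T.card else n - T.card) else n)
      = T.card ^ P * (n - T.card) ^ Q * n ^ R := by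
    rw [← Finset.prod_filter_mul_prod_filter_not Finset.univ (fun i => deg i ≤ m)]
    congr 1
    · rw [← Finset.prod_filter_mul_prod_filter_not
        (Finset.univ.filter fun i => deg i ≤ m) (fun i => i ∈ S)]
      congr 1
      · rw [Finset.prod_congr rfl fun i hi => ?_, Finset.prod_const]
        · congr 1
          rw [hP]
          congr 1
          ext i
          simp only [Finset.mem_filter, Finset.mem_univ, true_and]
          tauto
        · rw [Finset.mem_filter, Finset.mem_filter] at hi
          rw [if_pos hi.1.2, if_pos hi.2]
      · rw [Finset.prod_congr rfl fun i hi => ?_, Finset.prod_const]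
        · congr 1
          rw [hQ]
          congr 1
          ext i
          simp only [Finset.mem_filter, Finset.mem_univ, true_and, Finset.mem_compl]
          tauto
        · rw [Finset.mem_filter, Finset.mem_filter] at hi
          rw [if_pos hi.1.2, if_neg hi.2]
    · rw [Finset.prod_congr rfl fun i hi => ?_, Finset.prod_const, hR]
      rw [Finset.mem_filter] at hi
      rw [if_neg hi.2]
  rw [hprod]
  -- the popularity bounds
  have hpop1 : (S.filter fun i => ¬ deg i ≤ m).card ≤ T.card / 2 :=
    popular_card_le hm S T g hg
  have hpop2 : (Sᶜ.filter fun i => ¬ deg i ≤ m).card ≤ Tᶜ.card / 2 := by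
    apply popular_card_le hm Sᶜ Tᶜ g
    intro j
    simp only [Finset.mem_compl]
    exact not_iff_not.2 (hg j)
  have hP1 : P + (S.filter fun i => ¬ deg i ≤ m).card = S.card := by
    rw [hP]; exact Finset.card_filter_add_card_filter_not _
  have hQ1 : Q + (Sᶜ.filter fun i => ¬ deg i ≤ m).card = Sᶜ.card := by
    rw [hQ]; exact Finset.card_filter_add_card_filter_not _
  have hScompl : Sᶜ.card = n - S.card := by rw [Finset.card_compl, Fintype.card_fin]
  have hTcompl : Tᶜ.card = n - T.card := by rw [Finset.card_compl, Fintype.card_fin]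
  have hsum : P + Q + R = n := by
    have h1 : P + Q = (Finset.univ.filter fun i : Fin n => deg i ≤ m).card := by
      rw [hP, hQ]
      rw [← Finset.card_union_of_disjoint]
      · congr 1
        rw [← Finset.filter_union]
        congr 1
        rw [Finset.union_compl]
      · exact Finset.disjoint_filter_filter disjoint_compl_right
    have h2 : (Finset.univ.filter fun i : Fin n => deg i ≤ m).card + R = n := by
      rw [hR]
      rw [Finset.card_filter_add_card_filter_not, Finset.card_univ, Fintype.card_fin]
    omega
  apply nat_pow_bound (Finset.card_le_univ T |>.trans_eq (by simp)) (Nat.sub_le n T.card)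
    ?_ ?_ hsum
  · have hT2 : (S.filter fun i => ¬ deg i ≤ m).card ≤ T.card / 2 := hpop1
    omega
  · have := hpop2
    rw [hTcompl] at this
    rw [← hScompl]
    omega

open Finset Classical in
lemma card_epair_le {n m : ℕ} (hm : 1 ≤ m) (S T : Finset (Fin n)) :
    (Finset.univ.filter fun p : (Fin n → Fin n) × (Fin n → Fin n) =>
        Epair n m S T p).card ≤ NE n S.card T.card := by
  classical
  set E1 : Finset (Fin n → Fin n) :=
    Finset.univ.filter fun g : Fin n → Fin n => ∀ j, j ∈ T ↔ g j ∈ S with hE1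
  have hsub : (Finset.univ.filter fun p : (Fin n → Fin n) × (Fin n → Fin n) =>
        Epair n m S T p)
      ⊆ E1.biUnion fun g => {g} ×ˢ (Finset.univ.filter fun h : Fin n → Fin n =>
          ∀ i, (Finset.univ.filter fun j => g j = i).card ≤ m → (i ∈ S ↔ h i ∈ T)) := by
    intro p hp
    rw [Finset.mem_filter] at hp
    obtain ⟨-, h1, h2⟩ := hp
    apply Finset.mem_biUnion.2
    refine ⟨p.1, Finset.mem_filter.2 ⟨Finset.mem_univ _, h1⟩, ?_⟩
    rw [Finset.mem_product]
    exact ⟨Finset.mem_singleton_self _, Finset.mem_filter.2 ⟨Finset.mem_univ _, h2⟩⟩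
  calc (Finset.univ.filter fun p : (Fin n → Fin n) × (Fin n → Fin n) =>
        Epair n m S T p).card
      ≤ ∑ g ∈ E1, ({g} ×ˢ (Finset.univ.filter fun h : Fin n → Fin n =>
          ∀ i, (Finset.univ.filter fun j => g j = i).card ≤ m → (i ∈ S ↔ h i ∈ T))).card :=
        (Finset.card_le_card hsub).trans Finset.card_biUnion_le
    _ ≤ ∑ _g ∈ E1, (T.card ^ (S.card - T.card / 2) *
          (n - T.card) ^ ((n - S.card) - (n - T.card) / 2) *
          n ^ (n - (S.card - T.card / 2) - ((n - S.card) - (n - T.card) / 2))) := by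
        apply Finset.sum_le_sum
        intro g hg
        rw [Finset.card_product, Finset.card_singleton, one_mul]
        exact card_round2_le hm S T g ((Finset.mem_filter.1 hg).2)
    _ = NE n S.card T.card := by
        rw [Finset.sum_const, smul_eq_mul, hE1, card_cutfun, NE]

open Finset Classical in
lemma card_cut_le {n m : ℕ} (hm : 1 ≤ m) (A B : Finset (Fin n)) :
    (Finset.univ.filter fun ω : Omega n => Cut n m A B ω).card
      ≤ NE n A.card B.card * NE n B.card A.card := by
  classical
  have hinj : ∀ ω ∈ (Finset.univ.filter fun ω : Omega n => Cut n m A B ω),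
      ((ω.2.2.1, ω.2.1), (ω.1, ω.2.2.2)) ∈
        ((Finset.univ.filter fun p : (Fin n → Fin n) × (Fin n → Fin n) => Epair n m A B p) ×ˢ
         (Finset.univ.filter fun p : (Fin n → Fin n) × (Fin n → Fin n) => Epair n m B A p)) := by
    intro ω hω
    rw [Finset.mem_filter] at hω
    rw [Finset.mem_product]
    exact ⟨Finset.mem_filter.2 ⟨Finset.mem_univ _, hω.2.1⟩,
      Finset.mem_filter.2 ⟨Finset.mem_univ _, hω.2.2⟩⟩
  calc (Finset.univ.filter fun ω : Omega n => Cut n m A B ω).card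
      ≤ ((Finset.univ.filter fun p : (Fin n → Fin n) × (Fin n → Fin n) => Epair n m A B p) ×ˢ
         (Finset.univ.filter fun p : (Fin n → Fin n) × (Fin n → Fin n) => Epair n m B A p)).card := by
        apply Finset.card_le_card_of_injOn (fun ω => ((ω.2.2.1, ω.2.1), (ω.1, ω.2.2.2))) (fun ω hω => hinj ω hω)
        intro ω1 _ ω2 _ heq
        obtain ⟨f1, f2, g1, g2⟩ := ω1
        obtain ⟨f1', f2', g1', g2'⟩ := ω2
        simp only [Prod.mk.injEq] at heq ⊢
        exact ⟨heq.2.1, heq.1.2, heq.1.1, heq.2.2⟩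
    _ = _ := by rw [Finset.card_product]
    _ ≤ NE n A.card B.card * NE n B.card A.card :=
        Nat.mul_le_mul (card_epair_le hm A B) (card_epair_le hm B A)

/-- `g(a) = (a/n)^(a/2) ((n-a)/n)^((n-a)/2)`, the per-side weight. -/
noncomputable def gReal (n a : ℕ) : ℝ :=
  ((a : ℝ)/n) ^ ((a : ℝ)/2) * (((n : ℝ) - a)/n) ^ (((n : ℝ) - a)/2)

lemma gReal_nonneg {n a : ℕ} (h : a ≤ n) : 0 ≤ gReal n a := by
  unfold gReal
  have h1 : (0:ℝ) ≤ (a:ℝ)/n := by positivity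
  have h2 : (0:ℝ) ≤ ((n:ℝ) - a)/n := by
    apply div_nonneg _ (by positivity)
    have : (a:ℝ) ≤ n := by exact_mod_cast h
    linarith
  exact mul_nonneg (Real.rpow_nonneg h1 _) (Real.rpow_nonneg h2 _)

/-- Core real inequality, asymmetric version assuming `b ≤ a`. -/
lemma core_aux {n a b : ℕ} (hb1 : 1 ≤ b) (hba : b ≤ a) (ha : a ≤ n - 1) (hn : 2 ≤ n) :
    ((b:ℝ)/n) ^ ((a:ℝ) - (b:ℝ)/2) * (((n:ℝ) - b)/n) ^ (((n:ℝ) - a) - ((n:ℝ) - b)/2) *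
      (((a:ℝ)/n) ^ ((b:ℝ) - (a:ℝ)/2) * (((n:ℝ) - a)/n) ^ (((n:ℝ) - b) - ((n:ℝ) - a)/2))
      ≤ gReal n a * gReal n b := by
  have hN : (0:ℝ) < n := by positivity
  set N := (n:ℝ)
  have haN : (a:ℝ) ≤ N - 1 := by
    have : (a:ℝ) ≤ ((n-1 : ℕ):ℝ) := by exact_mod_cast ha
    have : ((n-1:ℕ):ℝ) = N - 1 := by
      have : (1:ℕ) ≤ n := by omega
      push_cast [Nat.cast_sub this]
      ring
    linarith [this ▸ (by exact_mod_cast ha : (a:ℝ) ≤ ((n-1 : ℕ):ℝ))]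
  have hb0 : (1:ℝ) ≤ (b:ℝ) := by exact_mod_cast hb1
  have hbaR : (b:ℝ) ≤ (a:ℝ) := by exact_mod_cast hba
  set x := (a:ℝ)/N with hx
  set y := (b:ℝ)/N with hy
  set x' := (N - a)/N with hx'
  set y' := (N - b)/N with hy'
  have hxpos : 0 < x := by apply div_pos; linarith; exact hN
  have hypos : 0 < y := by apply div_pos; linarith; exact hN
  have hx'pos : 0 < x' := by apply div_pos; linarith; exact hN
  have hy'pos : 0 < y' := by apply div_pos; linarith; exact hN
  have hyx : y ≤ x := by rw [hy, hx]; gcongr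
  have hx'y' : x' ≤ y' := by rw [hx', hy']; gcongr <;> linarith
  have hxy1 : y * x' ≤ x * y' := by
    rw [hx, hy, hx', hy']
    rw [div_mul_div_comm, div_mul_div_comm]
    gcongr
    nlinarith
  set t := (a:ℝ) - (b:ℝ) with ht
  have htnn : 0 ≤ t := by rw [ht]; linarith
  -- exponent splittings
  have e1 : y ^ ((a:ℝ) - (b:ℝ)/2) = y ^ ((b:ℝ)/2) * y ^ t := by
    rw [← Real.rpow_add hypos]; congr 1; rw [ht]; ring
  have e2 : y' ^ ((N - a) - (N - b)/2) = y' ^ ((N - (b:ℝ))/2) * y' ^ (-t) := by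
    rw [← Real.rpow_add hy'pos]; congr 1; rw [ht]; ring
  have e3 : x ^ ((b:ℝ) - (a:ℝ)/2) = x ^ ((a:ℝ)/2) * x ^ (-t) := by
    rw [← Real.rpow_add hxpos]; congr 1; rw [ht]; ring
  have e4 : x' ^ ((N - b) - (N - a)/2) = x' ^ ((N - (a:ℝ))/2) * x' ^ t := by
    rw [← Real.rpow_add hx'pos]; congr 1; rw [ht]; ring
  rw [e1, e2, e3, e4]
  have hgg : gReal n a * gReal n b
      = (x ^ ((a:ℝ)/2) * x' ^ ((N - (a:ℝ))/2)) * (y ^ ((b:ℝ)/2) * y' ^ ((N - (b:ℝ))/2)) := by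
    unfold gReal; rw [hx, hy, hx', hy']
  have key : (y * x') ^ t ≤ (x * y') ^ t :=
    Real.rpow_le_rpow (by positivity) hxy1 htnn
  have hcross : y ^ t * x' ^ t * (y' ^ (-t) * x ^ (-t)) ≤ 1 := by
    rw [← Real.mul_rpow hypos.le hx'pos.le]
    rw [Real.rpow_neg hy'pos.le, Real.rpow_neg hxpos.le]
    have hxy'pos : 0 < (x * y') ^ t := Real.rpow_pos_of_pos (by positivity) t
    rw [← mul_inv, ← Real.mul_rpow hy'pos.le hxpos.le]
    have h1 : (y * x') ^ t ≤ (y' * x) ^ t := by rw [mul_comm y' x]; exact key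
    have h2 : (0:ℝ) < (y' * x) ^ t := Real.rpow_pos_of_pos (by positivity) t
    calc (y * x') ^ t * ((y' * x) ^ t)⁻¹ ≤ (y' * x) ^ t * ((y' * x) ^ t)⁻¹ := by gcongr
      _ = 1 := mul_inv_cancel₀ h2.ne'
  calc y ^ ((b:ℝ)/2) * y ^ t * (y' ^ ((N - (b:ℝ))/2) * y' ^ (-t)) *
        (x ^ ((a:ℝ)/2) * x ^ (-t) * (x' ^ ((N - (a:ℝ))/2) * x' ^ t))
      = (x ^ ((a:ℝ)/2) * x' ^ ((N - (a:ℝ))/2)) * (y ^ ((b:ℝ)/2) * y' ^ ((N - (b:ℝ))/2)) *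
          (y ^ t * x' ^ t * (y' ^ (-t) * x ^ (-t))) := by ring
    _ ≤ (x ^ ((a:ℝ)/2) * x' ^ ((N - (a:ℝ))/2)) * (y ^ ((b:ℝ)/2) * y' ^ ((N - (b:ℝ))/2)) * 1 := by
        apply mul_le_mul_of_nonneg_left hcross
        positivity
    _ = gReal n a * gReal n b := by rw [mul_one, hgg]

/-- Core inequality with natural subtraction/division exponents. -/
lemma core_nat {n a b : ℕ} (ha1 : 1 ≤ a) (ha : a ≤ n - 1) (hb1 : 1 ≤ b) (hb : b ≤ n - 1)
    (hn : 2 ≤ n) :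
    ((b:ℝ)/n) ^ (a - b/2) * (((n:ℝ) - b)/n) ^ ((n - a) - (n - b)/2) *
      (((a:ℝ)/n) ^ (b - a/2) * (((n:ℝ) - a)/n) ^ ((n - b) - (n - a)/2))
      ≤ gReal n a * gReal n b := by
  have hN : (0:ℝ) < n := by positivity
  have haR : (a:ℝ) ≤ (n:ℝ) - 1 := by
    have := (Nat.cast_le (α := ℝ)).2 ha
    rwa [Nat.cast_sub (by omega), Nat.cast_one] at this
  have hbR : (b:ℝ) ≤ (n:ℝ) - 1 := by
    have := (Nat.cast_le (α := ℝ)).2 hb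
    rwa [Nat.cast_sub (by omega), Nat.cast_one] at this
  have ha1R : (1:ℝ) ≤ a := by exact_mod_cast ha1
  have hb1R : (1:ℝ) ≤ b := by exact_mod_cast hb1
  -- bases in (0, 1]
  have hby : (0:ℝ) < (b:ℝ)/n := by positivity
  have hby1 : (b:ℝ)/n ≤ 1 := by rw [div_le_one hN]; linarith
  have hax : (0:ℝ) < (a:ℝ)/n := by positivity
  have hax1 : (a:ℝ)/n ≤ 1 := by rw [div_le_one hN]; linarith
  have hbz : (0:ℝ) < ((n:ℝ) - b)/n := by apply div_pos ?_ hN; linarith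
  have hbz1 : ((n:ℝ) - b)/n ≤ 1 := by rw [div_le_one hN]; linarith
  have haz : (0:ℝ) < ((n:ℝ) - a)/n := by apply div_pos ?_ hN; linarith
  have haz1 : ((n:ℝ) - a)/n ≤ 1 := by rw [div_le_one hN]; linarith
  -- cast exponent bounds: the ℕ exponents dominate the real ones
  have cast1 : (a:ℝ) - (b:ℝ)/2 ≤ ((a - b/2 : ℕ) : ℝ) := by
    have h1 : ((b/2 : ℕ) : ℝ) ≤ (b:ℝ)/2 := by exact_mod_cast Nat.cast_div_le
    rcases le_total (b/2) a with h | h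
    · rw [Nat.cast_sub h]; linarith
    · have : (a:ℝ) ≤ ((b/2:ℕ):ℝ) := by exact_mod_cast h
      have : a - b/2 = 0 := by omega
      rw [this]; push_cast; linarith
  have cast2 : ((n:ℝ) - a) - ((n:ℝ) - b)/2 ≤ (((n - a) - (n - b)/2 : ℕ) : ℝ) := by
    have hna : ((n - a : ℕ) : ℝ) = (n:ℝ) - a := by
      rw [Nat.cast_sub (by omega)]
    have hnb : ((n - b : ℕ) : ℝ) = (n:ℝ) - b := by
      rw [Nat.cast_sub (by omega)]
    have h1 : (((n-b)/2 : ℕ) : ℝ) ≤ ((n:ℝ) - b)/2 := by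
      calc (((n-b)/2 : ℕ) : ℝ) ≤ ((n - b : ℕ):ℝ)/2 := by exact_mod_cast Nat.cast_div_le
        _ = ((n:ℝ) - b)/2 := by rw [hnb]
    rcases le_total ((n-b)/2) (n-a) with h | h
    · rw [Nat.cast_sub h, hna]; linarith
    · have : ((n-a:ℕ):ℝ) ≤ (((n-b)/2:ℕ):ℝ) := by exact_mod_cast h
      have h0 : (n - a) - (n - b)/2 = 0 := by omega
      rw [h0]; push_cast
      rw [hna] at this
      linarith
  have cast3 : (b:ℝ) - (a:ℝ)/2 ≤ ((b - a/2 : ℕ) : ℝ) := by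
    have h1 : ((a/2 : ℕ) : ℝ) ≤ (a:ℝ)/2 := by exact_mod_cast Nat.cast_div_le
    rcases le_total (a/2) b with h | h
    · rw [Nat.cast_sub h]; linarith
    · have : (b:ℝ) ≤ ((a/2:ℕ):ℝ) := by exact_mod_cast h
      have h0 : b - a/2 = 0 := by omega
      rw [h0]; push_cast; linarith
  have cast4 : ((n:ℝ) - b) - ((n:ℝ) - a)/2 ≤ (((n - b) - (n - a)/2 : ℕ) : ℝ) := by
    have hna : ((n - a : ℕ) : ℝ) = (n:ℝ) - a := by rw [Nat.cast_sub (by omega)]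
    have hnb : ((n - b : ℕ) : ℝ) = (n:ℝ) - b := by rw [Nat.cast_sub (by omega)]
    have h1 : (((n-a)/2 : ℕ) : ℝ) ≤ ((n:ℝ) - a)/2 := by
      calc (((n-a)/2 : ℕ) : ℝ) ≤ ((n - a : ℕ):ℝ)/2 := by exact_mod_cast Nat.cast_div_le
        _ = ((n:ℝ) - a)/2 := by rw [hna]
    rcases le_total ((n-a)/2) (n-b) with h | h
    · rw [Nat.cast_sub h, hnb]; linarith
    · have : ((n-b:ℕ):ℝ) ≤ (((n-a)/2:ℕ):ℝ) := by exact_mod_cast h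
      have h0 : (n - b) - (n - a)/2 = 0 := by omega
      rw [h0]; push_cast
      rw [hnb] at this
      linarith
  -- replace ℕ powers by rpow and weaken exponents
  have step : ∀ (x : ℝ) (hx : 0 < x) (hx1 : x ≤ 1) (k : ℕ) (e : ℝ), e ≤ (k:ℝ) →
      x ^ k ≤ x ^ e := by
    intro x hx hx1 k e he
    rw [← Real.rpow_natCast x k]
    exact Real.rpow_le_rpow_of_exponent_ge hx hx1 he
  have main : ((b:ℝ)/n) ^ ((a:ℝ) - (b:ℝ)/2) * (((n:ℝ) - b)/n) ^ (((n:ℝ) - a) - ((n:ℝ) - b)/2) *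
      (((a:ℝ)/n) ^ ((b:ℝ) - (a:ℝ)/2) * (((n:ℝ) - a)/n) ^ (((n:ℝ) - b) - ((n:ℝ) - a)/2))
      ≤ gReal n a * gReal n b := by
    rcases le_total b a with h | h
    · exact core_aux hb1 h ha hn
    · calc _ = ((a:ℝ)/n) ^ ((b:ℝ) - (a:ℝ)/2) * (((n:ℝ) - a)/n) ^ (((n:ℝ) - b) - ((n:ℝ) - a)/2) *
            (((b:ℝ)/n) ^ ((a:ℝ) - (b:ℝ)/2) * (((n:ℝ) - b)/n) ^ (((n:ℝ) - a) - ((n:ℝ) - b)/2)) := by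
              ring
        _ ≤ gReal n b * gReal n a := core_aux ha1 h hb hn
        _ = gReal n a * gReal n b := by ring
  refine le_trans ?_ main
  have t1 := step _ hby hby1 (a - b/2) _ cast1
  have t2 := step _ hbz hbz1 ((n-a) - (n-b)/2) _ cast2
  have t3 := step _ hax hax1 (b - a/2) _ cast3
  have t4 := step _ haz haz1 ((n-b) - (n-a)/2) _ cast4
  have nn : ∀ (x : ℝ) (e : ℝ), (0:ℝ) ≤ x → 0 ≤ x ^ e := fun x e hx => Real.rpow_nonneg hx e
  apply mul_le_mul (mul_le_mul t1 t2 (by positivity) (nn _ _ hby.le))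
    (mul_le_mul t3 t4 (by positivity) (nn _ _ hax.le)) (by positivity)
  exact mul_nonneg (nn _ _ hby.le) (nn _ _ hbz.le)

/-- Binomial pmf bound: `C(n,a) b^a (n-b)^(n-a) ≤ n^n`. -/
lemma binom_bound {n a b : ℕ} (ha : a ≤ n) (hb : b ≤ n) :
    (n.choose a : ℝ) * (b:ℝ) ^ a * ((n:ℝ) - b) ^ (n - a) ≤ (n:ℝ) ^ n := by
  have hbR : (b:ℝ) ≤ n := by exact_mod_cast hb
  calc (n.choose a : ℝ) * (b:ℝ) ^ a * ((n:ℝ) - b) ^ (n - a)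
      = (b:ℝ) ^ a * ((n:ℝ) - b) ^ (n - a) * (n.choose a : ℝ) := by ring
    _ ≤ ∑ k ∈ Finset.range (n + 1), (b:ℝ) ^ k * ((n:ℝ) - b) ^ (n - k) * (n.choose k : ℝ) := by
        apply Finset.single_le_sum (f := fun k => (b:ℝ) ^ k * ((n:ℝ) - b) ^ (n - k) * (n.choose k : ℝ))
        · intro k _
          have : (0:ℝ) ≤ (n:ℝ) - b := by linarith
          positivity
        · exact Finset.mem_range.2 (by omega)
    _ = ((b:ℝ) + ((n:ℝ) - b)) ^ n := (add_pow _ _ _).symm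
    _ = (n:ℝ) ^ n := by norm_num

lemma card_omega (n : ℕ) : Fintype.card (Omega n) = n ^ (4 * n) := by
  simp only [Omega, Fintype.card_prod, Fintype.card_fun, Fintype.card_fin]
  rw [← pow_add, ← pow_add, ← pow_add]
  congr 1
  ring

open Finset Classical in
lemma pr_cut_le {n m : ℕ} (hm : 1 ≤ m) (hn : 2 ≤ n) (A B : Finset (Fin n))
    (hA : A.Nonempty) (hA' : A ≠ Finset.univ) (hB : B.Nonempty) (hB' : B ≠ Finset.univ) :
    pr n (Cut n m A B) ≤ (gReal n A.card / (n.choose A.card)) *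
      (gReal n B.card / (n.choose B.card)) := by
  set a := A.card with hadef
  set b := B.card with hbdef
  have ha1 : 1 ≤ a := Finset.card_pos.2 hA
  have hb1 : 1 ≤ b := Finset.card_pos.2 hB
  have haU : a ≤ n - 1 := by
    have : a < n := by
      have := Finset.card_lt_card (Finset.ssubset_univ_iff.2 hA')
      simpa using this
    omega
  have hbU : b ≤ n - 1 := by
    have : b < n := by
      have := Finset.card_lt_card (Finset.ssubset_univ_iff.2 hB')
      simpa using this
    omega
  have hN : (0:ℝ) < (n:ℝ) := by positivity
  set N := (n:ℝ)
  have haR : (a:ℝ) ≤ N - 1 := by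
    have := (Nat.cast_le (α := ℝ)).2 haU
    rwa [Nat.cast_sub (by omega), Nat.cast_one] at this
  have hbR : (b:ℝ) ≤ N - 1 := by
    have := (Nat.cast_le (α := ℝ)).2 hbU
    rwa [Nat.cast_sub (by omega), Nat.cast_one] at this
  have ha1R : (1:ℝ) ≤ (a:ℝ) := by exact_mod_cast ha1
  have hb1R : (1:ℝ) ≤ (b:ℝ) := by exact_mod_cast hb1
  set v1 := a - b/2 with hv1
  set v2 := (n - a) - (n - b)/2 with hv2
  set w1 := b - a/2 with hw1
  set w2 := (n - b) - (n - a)/2 with hw2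
  have hCa : (0:ℝ) < (n.choose a : ℝ) := by
    exact_mod_cast Nat.choose_pos (show a ≤ n by omega)
  have hCb : (0:ℝ) < (n.choose b : ℝ) := by
    exact_mod_cast Nat.choose_pos (show b ≤ n by omega)
  have hga : 0 ≤ gReal n a := gReal_nonneg (by omega)
  have hgb : 0 ≤ gReal n b := gReal_nonneg (by omega)
  -- the main multiplicative inequality
  have main : (NE n a b : ℝ) * (NE n b a : ℝ) * ((n.choose a : ℝ) * (n.choose b : ℝ))
      ≤ gReal n a * gReal n b * N ^ (4 * n) := by
    have hcast1 : ((n - a : ℕ) : ℝ) = N - a := by rw [Nat.cast_sub (by omega)]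
    have hcast2 : ((n - b : ℕ) : ℝ) = N - b := by rw [Nat.cast_sub (by omega)]
    have hNE1 : (NE n a b : ℝ)
        = (a:ℝ)^b * (N - a)^(n - b) * ((b:ℝ)^v1 * (N - b)^v2 * N^(n - v1 - v2)) := by
      unfold NE
      push_cast [hcast1, hcast2]
      ring
    have hNE2 : (NE n b a : ℝ)
        = (b:ℝ)^a * (N - b)^(n - a) * ((a:ℝ)^w1 * (N - a)^w2 * N^(n - w1 - w2)) := by
      unfold NE
      push_cast [hcast1, hcast2]
      ring
    have f1 : (n.choose a : ℝ) * (b:ℝ)^a * (N - b)^(n - a) ≤ N^n :=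
      binom_bound (by omega) (by omega)
    have f2 : (n.choose b : ℝ) * (a:ℝ)^b * (N - a)^(n - b) ≤ N^n :=
      binom_bound (by omega) (by omega)
    have hcore := core_nat ha1 haU hb1 hbU hn
    have f3 : (b:ℝ)^v1 * (N - b)^v2 * ((a:ℝ)^w1 * (N - a)^w2)
        ≤ gReal n a * gReal n b * N ^ (v1 + v2 + w1 + w2) := by
      rw [div_pow, div_pow, div_pow, div_pow] at hcore
      have heq : (b:ℝ)^v1/N^v1 * ((N - b)^v2/N^v2) * ((a:ℝ)^w1/N^w1 * ((N - a)^w2/N^w2))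
          = ((b:ℝ)^v1 * (N - b)^v2 * ((a:ℝ)^w1 * (N - a)^w2)) / N ^ (v1 + v2 + w1 + w2) := by
        rw [div_mul_div_comm, div_mul_div_comm, div_mul_div_comm]
        congr 1
        rw [← pow_add, ← pow_add, ← pow_add]
        congr 1
        ring
      rw [heq, div_le_iff₀ (show (0:ℝ) < N ^ (v1 + v2 + w1 + w2) by positivity)] at hcore
      linarith [hcore]
    have hb0 : (0:ℝ) ≤ (b:ℝ) := by positivity
    have hNb0 : (0:ℝ) ≤ N - b := by linarith
    have hNa0 : (0:ℝ) ≤ N - a := by linarith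
    calc (NE n a b : ℝ) * (NE n b a : ℝ) * ((n.choose a : ℝ) * (n.choose b : ℝ))
        = ((n.choose a : ℝ) * (b:ℝ)^a * (N - b)^(n - a)) *
            (((n.choose b : ℝ) * (a:ℝ)^b * (N - a)^(n - b)) *
              (((b:ℝ)^v1 * (N - b)^v2 * ((a:ℝ)^w1 * (N - a)^w2)) *
                (N^(n - v1 - v2) * N^(n - w1 - w2)))) := by
          rw [hNE1, hNE2]; ring
      _ ≤ N^n * (N^n * ((gReal n a * gReal n b * N ^ (v1 + v2 + w1 + w2)) *
            (N^(n - v1 - v2) * N^(n - w1 - w2)))) := by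
          have hx3 : (0:ℝ) ≤ (b:ℝ)^v1 * (N - b)^v2 * ((a:ℝ)^w1 * (N - a)^w2) := by positivity
          apply mul_le_mul f1 ?_ (by positivity) (by positivity)
          apply mul_le_mul f2 ?_ (by positivity) (by positivity)
          exact mul_le_mul_of_nonneg_right f3 (by positivity)
      _ = gReal n a * gReal n b *
            (N^n * N^n * N ^ (v1 + v2 + w1 + w2) * N^(n - v1 - v2) * N^(n - w1 - w2)) := by
          ring
      _ = gReal n a * gReal n b * N ^ (4 * n) := by
          rw [← pow_add, ← pow_add, ← pow_add, ← pow_add]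
          congr 2
          have h1 : v1 ≤ a := by omega
          have h2 : v2 ≤ n - a := by omega
          have h3 : w1 ≤ b := by omega
          have h4 : w2 ≤ n - b := by omega
          omega
  -- conclude
  have final : (NE n a b : ℝ) * (NE n b a : ℝ)
      ≤ gReal n a / (n.choose a : ℝ) * (gReal n b / (n.choose b : ℝ)) * N ^ (4 * n) := by
    rw [div_mul_div_comm, div_mul_eq_mul_div, le_div_iff₀ (by positivity)]
    exact main
  unfold pr
  rw [div_le_iff₀ (by rw [card_omega]; positivity)]
  calc ((Finset.univ.filter fun ω : Omega n => Cut n m A B ω).card : ℝ)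
      ≤ (NE n a b : ℝ) * (NE n b a : ℝ) := by exact_mod_cast card_cut_le hm A B
    _ ≤ gReal n a / (n.choose a : ℝ) * (gReal n b / (n.choose b : ℝ)) *
          (Fintype.card (Omega n) : ℝ) := by
        rw [card_omega]
        push_cast
        exact final

lemma sqrt_le_exp (a : ℕ) (h : 1 ≤ a) : Real.sqrt a ≤ 2 * Real.exp ((a:ℝ)/8) := by
  have h1 : (a:ℝ) ≤ 4 * Real.exp ((a:ℝ)/4) := by
    have := Real.add_one_le_exp ((a:ℝ)/4)
    nlinarith [Real.exp_pos ((a:ℝ)/4)]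
  calc Real.sqrt a ≤ Real.sqrt (4 * Real.exp ((a:ℝ)/4)) := Real.sqrt_le_sqrt h1
    _ = 2 * Real.exp ((a:ℝ)/8) := by
      rw [show (4:ℝ) * Real.exp ((a:ℝ)/4) = (2 * Real.exp ((a:ℝ)/8))^2 by
        have hsq : Real.exp ((a:ℝ)/8) ^ 2 = Real.exp ((a:ℝ)/4) := by
          rw [sq, ← Real.exp_add]
          congr 1
          ring
        rw [mul_pow, hsq]
        norm_num]
      exact Real.sqrt_sq (by positivity)

lemma gReal_symm {n a : ℕ} (h : a ≤ n) : gReal n (n - a) = gReal n a := by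
  unfold gReal
  rw [Nat.cast_sub h]
  have : (n:ℝ) - ((n:ℝ) - a) = (a:ℝ) := by ring
  rw [this, mul_comm]

lemma gReal_le_half {n a : ℕ} (hn : 2 ≤ n) (ha1 : 1 ≤ a) (h2a : 2 * a ≤ n) :
    gReal n a ≤ 2 / Real.sqrt n * Real.exp (-(a:ℝ)/8) := by
  have hN : (0:ℝ) < n := by positivity
  have haR : (a:ℝ) ≥ 1 := by exact_mod_cast ha1
  have h2aR : 2 * (a:ℝ) ≤ n := by exact_mod_cast h2a
  have hxpos : (0:ℝ) < (a:ℝ)/n := by positivity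
  have hx1 : (a:ℝ)/n ≤ 1 := by rw [div_le_one hN]; linarith
  have hx'pos : (0:ℝ) < ((n:ℝ) - a)/n := by apply div_pos ?_ hN; linarith
  -- first factor
  have e1 : ((a:ℝ)/n) ^ ((a:ℝ)/2) ≤ ((a:ℝ)/n) ^ ((1:ℝ)/2) :=
    Real.rpow_le_rpow_of_exponent_ge hxpos hx1 (by linarith)
  have e1' : ((a:ℝ)/n) ^ ((1:ℝ)/2) = Real.sqrt a / Real.sqrt n := by
    rw [← Real.sqrt_eq_rpow, Real.sqrt_div (by positivity : (0:ℝ) ≤ (a:ℝ))]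
  -- second factor
  have e2 : (((n:ℝ) - a)/n) ^ (((n:ℝ) - a)/2) ≤ Real.exp (-(a:ℝ)/4) := by
    rw [Real.rpow_def_of_pos hx'pos]
    apply Real.exp_le_exp.2
    have hlog : Real.log (((n:ℝ) - a)/n) ≤ -((a:ℝ)/n) := by
      have h1 : ((n:ℝ) - a)/n - 1 = -((a:ℝ)/n) := by field_simp; ring
      have := Real.log_le_sub_one_of_pos hx'pos
      linarith
    have hs : (0:ℝ) ≤ ((n:ℝ) - a)/2 := by linarith
    calc Real.log (((n:ℝ) - a)/n) * (((n:ℝ) - a)/2)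
        ≤ (-((a:ℝ)/n)) * (((n:ℝ) - a)/2) := by
          apply mul_le_mul_of_nonneg_right hlog hs
      _ ≤ -(a:ℝ)/4 := by
          have key : (a:ℝ)/4 ≤ ((a:ℝ)/n) * (((n:ℝ) - a)/2) := by
            rw [div_mul_div_comm, div_le_div_iff₀ (by norm_num) (by positivity)]
            nlinarith
          linarith
  calc gReal n a ≤ (Real.sqrt a / Real.sqrt n) * Real.exp (-(a:ℝ)/4) := by
        unfold gReal
        apply mul_le_mul (e1.trans_eq e1') e2 (Real.rpow_nonneg hx'pos.le _) (by positivity)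
    _ ≤ (2 * Real.exp ((a:ℝ)/8) / Real.sqrt n) * Real.exp (-(a:ℝ)/4) := by
        apply mul_le_mul_of_nonneg_right _ (Real.exp_pos _).le
        gcongr
        exact sqrt_le_exp a ha1
    _ = 2 / Real.sqrt n * Real.exp (-(a:ℝ)/8) := by
        have hexp : Real.exp ((a:ℝ)/8) * Real.exp (-(a:ℝ)/4) = Real.exp (-(a:ℝ)/8) := by
          rw [← Real.exp_add]
          congr 1
          ring
        calc (2 * Real.exp ((a:ℝ)/8) / Real.sqrt n) * Real.exp (-(a:ℝ)/4)
            = 2 / Real.sqrt n * (Real.exp ((a:ℝ)/8) * Real.exp (-(a:ℝ)/4)) := by ring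
          _ = 2 / Real.sqrt n * Real.exp (-(a:ℝ)/8) := by rw [hexp]

example : True := trivial

lemma gReal_le {n a : ℕ} (hn : 2 ≤ n) (ha1 : 1 ≤ a) (ha : a ≤ n - 1) :
    gReal n a ≤ 2 / Real.sqrt n * (Real.exp (-(a:ℝ)/8) + Real.exp (-((n:ℝ) - a)/8)) := by
  have hs : (0:ℝ) < Real.sqrt n := Real.sqrt_pos.2 (by positivity)
  rcases le_or_gt (2*a) n with h | h
  · calc gReal n a ≤ 2 / Real.sqrt n * Real.exp (-(a:ℝ)/8) := gReal_le_half hn ha1 h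
      _ ≤ _ := by
        apply mul_le_mul_of_nonneg_left _ (by positivity)
        have := (Real.exp_pos (-((n:ℝ) - a)/8)).le
        linarith
  · have ha'1 : 1 ≤ n - a := by omega
    have h2a' : 2 * (n - a) ≤ n := by omega
    have hcast : ((n - a : ℕ):ℝ) = (n:ℝ) - a := by rw [Nat.cast_sub (by omega)]
    calc gReal n a = gReal n (n - a) := (gReal_symm (by omega)).symm
      _ ≤ 2 / Real.sqrt n * Real.exp (-((n - a : ℕ):ℝ)/8) := gReal_le_half hn ha'1 h2a'
      _ ≤ _ := by
        rw [hcast]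
        apply mul_le_mul_of_nonneg_left _ (by positivity)
        have := (Real.exp_pos (-(a:ℝ)/8)).le
        linarith

lemma geom_bound {n : ℕ} : ∑ a ∈ Finset.Icc 1 (n-1), Real.exp (-(a:ℝ)/8) ≤ 9 := by
  set r := Real.exp (-(1:ℝ)/8) with hr
  have hr0 : 0 < r := Real.exp_pos _
  have hr1 : r < 1 := by
    rw [hr]
    apply Real.exp_lt_one_iff.2
    norm_num
  have hterm : ∀ a : ℕ, Real.exp (-(a:ℝ)/8) = r ^ a := by
    intro a
    rw [hr, ← Real.exp_nat_mul]
    congr 1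
    ring
  have hr89 : r ≤ 8/9 := by
    rw [hr]
    have h1 : (9:ℝ)/8 ≤ Real.exp ((1:ℝ)/8) := by
      have := Real.add_one_le_exp ((1:ℝ)/8)
      linarith
    rw [show (-(1:ℝ)/8) = -((1:ℝ)/8) by ring, Real.exp_neg]
    rw [inv_le_comm₀ (Real.exp_pos _) (by norm_num)]
    linarith
  calc ∑ a ∈ Finset.Icc 1 (n-1), Real.exp (-(a:ℝ)/8)
      = ∑ a ∈ Finset.Icc 1 (n-1), r ^ a := by
        exact Finset.sum_congr rfl fun a _ => hterm a
    _ ≤ ∑ a ∈ Finset.range n, r ^ a := by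
        apply Finset.sum_le_sum_of_subset_of_nonneg
        · intro a ha
          rw [Finset.mem_Icc] at ha
          rw [Finset.mem_range]
          omega
        · intro a _ _
          positivity
    _ = (1 - r ^ n)/(1 - r) := by
        rw [geom_sum_eq hr1.ne n]
        rw [div_eq_div_iff (by linarith) (by linarith)]
        ring
    _ ≤ 1/(1 - r) := by
        gcongr
        have h0 : (0:ℝ) ≤ r ^ n := by positivity
        linarith
    _ ≤ 9 := by
        rw [div_le_iff₀ (by linarith)]
        linarith

lemma geom_bound_reflect {n : ℕ} (hn : 2 ≤ n) :
    ∑ a ∈ Finset.Icc 1 (n-1), Real.exp (-((n:ℝ) - a)/8) ≤ 9 := by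
  have key : ∑ a ∈ Finset.Icc 1 (n-1), Real.exp (-((n:ℝ) - a)/8)
      = ∑ a ∈ Finset.Icc 1 (n-1), Real.exp (-(a:ℝ)/8) := by
    apply Finset.sum_nbij' (fun a => n - a) (fun a => n - a)
    · intro a ha
      rw [Finset.mem_Icc] at ha ⊢
      omega
    · intro a ha
      rw [Finset.mem_Icc] at ha ⊢
      omega
    · intro a ha
      rw [Finset.mem_Icc] at ha
      omega
    · intro a ha
      rw [Finset.mem_Icc] at ha
      omega
    · intro a ha
      rw [Finset.mem_Icc] at ha
      congr 1
      have hcast : ((n - a : ℕ):ℝ) = (n:ℝ) - a := by rw [Nat.cast_sub (by omega)]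
      rw [hcast]
  rw [key]
  exact geom_bound

lemma sum_g {n : ℕ} (hn : 2 ≤ n) :
    ∑ a ∈ Finset.Icc 1 (n-1), gReal n a ≤ 36 / Real.sqrt n := by
  have hs : (0:ℝ) < Real.sqrt n := Real.sqrt_pos.2 (by positivity)
  calc ∑ a ∈ Finset.Icc 1 (n-1), gReal n a
      ≤ ∑ a ∈ Finset.Icc 1 (n-1),
          2 / Real.sqrt n * (Real.exp (-(a:ℝ)/8) + Real.exp (-((n:ℝ) - a)/8)) := by
        apply Finset.sum_le_sum
        intro a ha
        rw [Finset.mem_Icc] at ha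
        exact gReal_le hn ha.1 ha.2
    _ = 2 / Real.sqrt n * (∑ a ∈ Finset.Icc 1 (n-1), Real.exp (-(a:ℝ)/8)
          + ∑ a ∈ Finset.Icc 1 (n-1), Real.exp (-((n:ℝ) - a)/8)) := by
        rw [← Finset.mul_sum, Finset.sum_add_distrib]
    _ ≤ 2 / Real.sqrt n * (9 + 9) := by
        apply mul_le_mul_of_nonneg_left _ (by positivity)
        exact add_le_add geom_bound (geom_bound_reflect hn)
    _ = 36 / Real.sqrt n := by ring

open Finset Classical in
lemma sum_h {n : ℕ} (hn : 2 ≤ n) :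
    ∑ A ∈ Finset.univ.filter (fun A : Finset (Fin n) => A.Nonempty ∧ A ≠ Finset.univ),
        gReal n A.card / (n.choose A.card : ℝ)
      ≤ ∑ a ∈ Finset.Icc 1 (n-1), gReal n a := by
  have hterm_nonneg : ∀ A : Finset (Fin n), A.card ≤ n →
      0 ≤ gReal n A.card / (n.choose A.card : ℝ) := by
    intro A hA
    apply div_nonneg (gReal_nonneg hA) (by positivity)
  calc ∑ A ∈ Finset.univ.filter (fun A : Finset (Fin n) => A.Nonempty ∧ A ≠ Finset.univ),
        gReal n A.card / (n.choose A.card : ℝ)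
      ≤ ∑ A ∈ (Finset.Icc 1 (n-1)).biUnion
          (fun a => Finset.powersetCard a (Finset.univ : Finset (Fin n))),
          gReal n A.card / (n.choose A.card : ℝ) := by
        apply Finset.sum_le_sum_of_subset_of_nonneg
        · intro A hA
          rw [Finset.mem_filter] at hA
          obtain ⟨-, hne, hnuniv⟩ := hA
          apply Finset.mem_biUnion.2
          refine ⟨A.card, ?_, ?_⟩
          · rw [Finset.mem_Icc]
            constructor
            · exact Finset.card_pos.2 hne
            · have : A.card < n := by
                have := Finset.card_lt_card (Finset.ssubset_univ_iff.2 hnuniv)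
                simpa using this
              omega
          · exact Finset.mem_powersetCard.2 ⟨Finset.subset_univ A, rfl⟩
        · intro A _ _
          exact hterm_nonneg A (by simpa using Finset.card_le_univ A)
    _ = ∑ a ∈ Finset.Icc 1 (n-1), ∑ A ∈ Finset.powersetCard a (Finset.univ : Finset (Fin n)),
          gReal n A.card / (n.choose A.card : ℝ) := by
        apply Finset.sum_biUnion
        intro x hx y hy hxy
        apply Finset.disjoint_left.2
        intro A hAx hAy
        rw [Finset.mem_powersetCard] at hAx hAy
        exact hxy (hAx.2 ▸ hAy.2 ▸ rfl)
    _ = ∑ a ∈ Finset.Icc 1 (n-1), gReal n a := by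
        apply Finset.sum_congr rfl
        intro a ha
        rw [Finset.mem_Icc] at ha
        have hchoose : (0:ℝ) < (n.choose a : ℝ) := by
          exact_mod_cast Nat.choose_pos (show a ≤ n by omega)
        calc ∑ A ∈ Finset.powersetCard a (Finset.univ : Finset (Fin n)),
              gReal n A.card / (n.choose A.card : ℝ)
            = ∑ _A ∈ Finset.powersetCard a (Finset.univ : Finset (Fin n)),
              gReal n a / (n.choose a : ℝ) := by
              apply Finset.sum_congr rfl
              intro A hA
              rw [(Finset.mem_powersetCard.1 hA).2]
          _ = (n.choose a : ℝ) * (gReal n a / (n.choose a : ℝ)) := by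
              rw [Finset.sum_const, nsmul_eq_mul]
              congr 1
              rw [Finset.card_powersetCard]
              simp
          _ = gReal n a := by field_simp


/-- Theorem 1(2): for `m ≥ 1` and any `ε > 0`, the probability that `B_{n,m}` is not
connected is at most `C·n^{−c_m+ε}`. -/
theorem statement_1 (m : ℕ) (hm : 1 ≤ m) (ε : ℝ) (hε : 0 < ε) :
    ∃ C : ℝ, 0 < C ∧ ∀ n : ℕ, 2 ≤ n →
      pr n (fun ω => ¬ (BGraph n m ω).Connected) ≤ C * (n : ℝ) ^ (-(cConst m) + ε) := by
  classical
  refine ⟨1296, by norm_num, ?_⟩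
  intro n hn
  set S := Finset.univ.filter (fun A : Finset (Fin n) => A.Nonempty ∧ A ≠ Finset.univ) with hS
  have hsqrt : (0:ℝ) < Real.sqrt n := Real.sqrt_pos.2 (by positivity)
  have step1 : pr n (fun ω => ¬ (BGraph n m ω).Connected)
      ≤ ∑ p ∈ S ×ˢ S, pr n (Cut n m p.1 p.2) := by
    apply pr_le_sum
    intro ω hω
    obtain ⟨p, hp, hc⟩ := exists_cut hn ω hω
    exact ⟨p, hp, hc⟩
  have step2 : ∑ p ∈ S ×ˢ S, pr n (Cut n m p.1 p.2)
      ≤ ∑ p ∈ S ×ˢ S, (gReal n p.1.card / (n.choose p.1.card : ℝ)) *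
          (gReal n p.2.card / (n.choose p.2.card : ℝ)) := by
    apply Finset.sum_le_sum
    intro p hp
    rw [Finset.mem_product, hS, Finset.mem_filter, Finset.mem_filter] at hp
    exact pr_cut_le hm hn p.1 p.2 hp.1.2.1 hp.1.2.2 hp.2.2.1 hp.2.2.2
  have step3 : ∑ p ∈ S ×ˢ S, (gReal n p.1.card / (n.choose p.1.card : ℝ)) *
          (gReal n p.2.card / (n.choose p.2.card : ℝ))
      = (∑ A ∈ S, gReal n A.card / (n.choose A.card : ℝ)) *
        (∑ B ∈ S, gReal n B.card / (n.choose B.card : ℝ)) := by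
    rw [Finset.sum_mul_sum]
    rw [Finset.sum_product]
  have hsum_nonneg : 0 ≤ ∑ A ∈ S, gReal n A.card / (n.choose A.card : ℝ) := by
    apply Finset.sum_nonneg
    intro A _
    apply div_nonneg (gReal_nonneg (by simpa using Finset.card_le_univ A)) (by positivity)
  have hsum_le : ∑ A ∈ S, gReal n A.card / (n.choose A.card : ℝ) ≤ 36 / Real.sqrt n :=
    (sum_h hn).trans (sum_g hn)
  have step4 : (∑ A ∈ S, gReal n A.card / (n.choose A.card : ℝ)) *
        (∑ B ∈ S, gReal n B.card / (n.choose B.card : ℝ)) ≤ 1296 / n := by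
    calc (∑ A ∈ S, gReal n A.card / (n.choose A.card : ℝ)) *
          (∑ B ∈ S, gReal n B.card / (n.choose B.card : ℝ))
        ≤ (36 / Real.sqrt n) * (36 / Real.sqrt n) :=
          mul_le_mul hsum_le hsum_le hsum_nonneg (by positivity)
      _ = 1296 / (Real.sqrt n * Real.sqrt n) := by
          rw [div_mul_div_comm]
          norm_num
      _ = 1296 / n := by rw [Real.mul_self_sqrt (by positivity)]
  have hfinal : pr n (fun ω => ¬ (BGraph n m ω).Connected) ≤ 1296 / n := by
    calc pr n (fun ω => ¬ (BGraph n m ω).Connected)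
        ≤ ∑ p ∈ S ×ˢ S, pr n (Cut n m p.1 p.2) := step1
      _ ≤ _ := step2
      _ = _ := step3
      _ ≤ 1296 / n := step4
  -- compare `1/n` with `n ^ (-c_m + ε)`
  have hgamma : 0 ≤ gammaConst m := by
    unfold gammaConst
    have hlog : Real.log 2 ≤ 1 := by
      have := Real.log_le_sub_one_of_pos (by norm_num : (0:ℝ) < 2)
      linarith
    have hsum : (0:ℝ) ≤ (Real.exp 1)⁻¹ * ∑ j ∈ Finset.range (m + 1),
        (1 : ℝ) / (Nat.factorial j) := by
      apply mul_nonneg (by positivity)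
      apply Finset.sum_nonneg
      intro j _
      positivity
    linarith
  have hdenom : (0:ℝ) < 1 + ((m : ℝ) + 1) * gammaConst m := by
    have : (0:ℝ) ≤ ((m:ℝ) + 1) * gammaConst m := by
      apply mul_nonneg (by positivity) hgamma
    linarith
  have hc1 : cConst m ≤ 1 := by
    unfold cConst
    have : (0:ℝ) ≤ 1.5 / (1 + ((m : ℝ) + 1) * gammaConst m) := by positivity
    linarith
  have hexp : (-1:ℝ) ≤ -(cConst m) + ε := by linarith
  have hinv : (n:ℝ)⁻¹ ≤ (n:ℝ) ^ (-(cConst m) + ε) := by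
    calc (n:ℝ)⁻¹ = (n:ℝ) ^ ((-1:ℝ)) := (Real.rpow_neg_one (n:ℝ)).symm
      _ ≤ (n:ℝ) ^ (-(cConst m) + ε) := by
          apply Real.rpow_le_rpow_of_exponent_le _ hexp
          exact_mod_cast (show 1 ≤ n by omega)
  calc pr n (fun ω => ¬ (BGraph n m ω).Connected) ≤ 1296 / n := hfinal
    _ = 1296 * (n:ℝ)⁻¹ := by ring
    _ ≤ 1296 * (n:ℝ) ^ (-(cConst m) + ε) := by
        apply mul_le_mul_of_nonneg_left hinv (by norm_num)
end

section
/- Let G be a bipartite graph with parts V₁ and V₂, each of size n ≥ 1, in which every vertex has at least one neighbor. If G has no perfect matching, then there exists a set K, contained either in V₁ or in V₂, such that: (i) the neighborhood Γ(K) satisfies |Γ(K)| = |K| − 1; (ii) 2 ≤ |K| ≤ ⌈n/2⌉; and (iii) every vertex of Γ(K) has at least two neighbors in K. -/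
/-!
Take a Hall violator `K` (a set with `|Γ(K)| < |K|`, which exists on `V₁` by Hall's theorem) of
minimum size among the violators on *both* sides. Deleting one vertex of `K` gives a
non-violator, so `|Γ(K)| ≥ |K| - 1`; if some vertex of `Γ(K)` had only one neighbour in `K`,
deleting that neighbour would shrink `Γ(K)` as well and produce a smaller violator. The
complement of `Γ(K)` is a violator on the other side of size `n - |K| + 1`, so minimality
gives `|K| ≤ ⌈n/2⌉`, and `|K| ≥ 2` because `Γ(K)` is nonempty.
-/

open Finset

namespace HallViolator

open scoped Classical

variable {A B : Type*} [Fintype B]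

noncomputable def nbhd (R : A → B → Prop) (S : Finset A) : Finset B :=
  univ.filter fun b => ∃ a ∈ S, R a b

def IsViolator (R : A → B → Prop) (S : Finset A) : Prop :=
  #(nbhd R S) < #S

def HallBelow (R : A → B → Prop) (k : ℕ) : Prop :=
  ∀ S : Finset A, #S < k → ¬ IsViolator R S

variable {R : A → B → Prop}

theorem mem_nbhd {S : Finset A} {b : B} : b ∈ nbhd R S ↔ ∃ a ∈ S, R a b := by
  simp [nbhd]

theorem nbhd_mono {S T : Finset A} (h : S ⊆ T) : nbhd R S ⊆ nbhd R T := by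
  intro b hb
  obtain ⟨a, ha, hab⟩ := mem_nbhd.1 hb
  exact mem_nbhd.2 ⟨a, h ha, hab⟩

theorem exists_isViolator_of_not_exists_equiv [Fintype A]
    (hcard : Fintype.card A = Fintype.card B)
    (hR : ¬ ∃ π : A ≃ B, ∀ a, R a (π a)) : ∃ S : Finset A, IsViolator R S := by
  by_contra! hHall
  obtain ⟨f, hinj, hf⟩ := (Fintype.all_card_le_filter_rel_iff_exists_injective R).1 fun S =>
    not_lt.1 (hHall S)
  have hbij : Function.Bijective f :=
    (Fintype.bijective_iff_injective_and_card f).2 ⟨hinj, hcard⟩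
  exact hR ⟨Equiv.ofBijective f hbij, hf⟩

theorem two_le_card_of_isViolator (hdeg : ∀ a, ∃ b, R a b) {K : Finset A}
    (hK : IsViolator R K) : 2 ≤ #K := by
  obtain ⟨a, ha⟩ : K.Nonempty := card_pos.1 (by unfold IsViolator at hK; omega)
  obtain ⟨b, hab⟩ := hdeg a
  have : 0 < #(nbhd R K) := card_pos.2 ⟨b, mem_nbhd.2 ⟨a, ha, hab⟩⟩
  unfold IsViolator at hK
  omega

theorem compl_nbhd_isViolator [Fintype A] (hcard : Fintype.card A = Fintype.card B)
    {K : Finset A} (hK : #(nbhd R K) = #K - 1) (hK₀ : K.Nonempty) :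
    IsViolator (fun b a => R a b) (univ \ nbhd R K) := by
  have hsub : nbhd (fun b a => R a b) (univ \ nbhd R K) ⊆ univ \ K := by
    intro a ha
    obtain ⟨b, hb, hab⟩ := mem_nbhd.1 ha
    simp only [mem_sdiff, mem_univ, true_and] at hb ⊢
    exact fun haK => hb (mem_nbhd.2 ⟨a, haK, hab⟩)
  have hle := card_le_card hsub
  rw [card_univ_sdiff] at hle
  have := hK₀.card_pos
  have := card_le_univ K
  rw [IsViolator, card_univ_sdiff, hK]
  omega

theorem card_sub_one_le_card_nbhd_erase {K : Finset A}
    (hmin : HallBelow R #K) {a : A} (ha : a ∈ K) :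
    #K - 1 ≤ #(nbhd R (K.erase a)) := by
  have := hmin (K.erase a) (card_erase_lt_of_mem ha)
  rw [IsViolator, card_erase_of_mem ha] at this
  omega

theorem card_nbhd_eq_card_sub_one {K : Finset A} (hK : IsViolator R K)
    (hmin : HallBelow R #K) : #(nbhd R K) = #K - 1 := by
  obtain ⟨a, ha⟩ : K.Nonempty := card_pos.1 (by unfold IsViolator at hK; omega)
  have := card_le_card (nbhd_mono (R := R) (K.erase_subset a))
  have := card_sub_one_le_card_nbhd_erase hmin ha
  unfold IsViolator at hK
  omega

theorem two_le_card_filter_of_mem_nbhd {K : Finset A} (hK : IsViolator R K)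
    (hmin : HallBelow R #K) {b : B} (hb : b ∈ nbhd R K) :
    2 ≤ #(K.filter fun a => R a b) := by
  by_contra! hone
  obtain ⟨a, ha, hab⟩ := mem_nbhd.1 hb
  have hunique : ∀ a' ∈ K, R a' b → a' = a := fun a' ha' ha'b =>
    card_le_one.1 (Nat.le_of_lt_succ hone) a' (mem_filter.2 ⟨ha', ha'b⟩) a
      (mem_filter.2 ⟨ha, hab⟩)
  have hsub : nbhd R (K.erase a) ⊆ (nbhd R K).erase b := by
    intro b' hb'
    obtain ⟨a', ha', ha'b'⟩ := mem_nbhd.1 hb'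
    obtain ⟨hne, ha'K⟩ := mem_erase.1 ha'
    refine mem_erase.2 ⟨?_, mem_nbhd.2 ⟨a', ha'K, ha'b'⟩⟩
    rintro rfl
    exact hne (hunique a' ha'K ha'b')
  have hle := card_le_card hsub
  rw [card_erase_of_mem hb] at hle
  have hge := card_sub_one_le_card_nbhd_erase hmin ha
  have hpos := card_pos.2 ⟨b, hb⟩
  have := card_nbhd_eq_card_sub_one hK hmin
  omega

theorem exists_isViolator_hallBelow [Fintype A] {S : Finset A} (hS : IsViolator R S) :
    (∃ K : Finset A, IsViolator R K ∧ HallBelow R #K ∧ HallBelow (fun b a => R a b) #K) ∨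
      ∃ K : Finset B, IsViolator (fun b a => R a b) K ∧ HallBelow (fun b a => R a b) #K ∧
        HallBelow R #K := by
  set sizes : Set ℕ := {c | (∃ K : Finset A, #K = c ∧ IsViolator R K) ∨
    ∃ K : Finset B, #K = c ∧ IsViolator (fun b a => R a b) K}
  have hsInf : ∀ c ∈ sizes, sInf sizes ≤ c := fun c hc => Nat.sInf_le hc
  rcases Nat.sInf_mem (s := sizes) ⟨#S, .inl ⟨S, rfl, hS⟩⟩ with
    ⟨K, hc, hK⟩ | ⟨K, hc, hK⟩
  · refine .inl ⟨K, hK, fun T hT hTv => ?_, fun T hT hTv => ?_⟩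
    · exact absurd (hsInf _ (.inl ⟨T, rfl, hTv⟩)) (by omega)
    · exact absurd (hsInf _ (.inr ⟨T, rfl, hTv⟩)) (by omega)
  · refine .inr ⟨K, hK, fun T hT hTv => ?_, fun T hT hTv => ?_⟩
    · exact absurd (hsInf _ (.inr ⟨T, rfl, hTv⟩)) (by omega)
    · exact absurd (hsInf _ (.inl ⟨T, rfl, hTv⟩)) (by omega)

theorem witness_of_hallBelow [Fintype A] {n : ℕ} (hA : Fintype.card A = n)
    (hB : Fintype.card B = n) (hdeg : ∀ a, ∃ b, R a b) {K : Finset A} (hK : IsViolator R K)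
    (hminA : HallBelow R #K) (hminB : HallBelow (fun b a => R a b) #K) :
    #(nbhd R K) = #K - 1 ∧ 2 ≤ #K ∧ #K ≤ (n + 1) / 2 ∧
      ∀ b ∈ nbhd R K, 2 ≤ #(K.filter fun a => R a b) := by
  have hcard := card_nbhd_eq_card_sub_one hK hminA
  have htwo := two_le_card_of_isViolator hdeg hK
  refine ⟨hcard, htwo, ?_, fun b hb => two_le_card_filter_of_mem_nbhd hK hminA hb⟩
  have hcompl := compl_nbhd_isViolator (hA.trans hB.symm) hcard (card_pos.1 (by omega))
  have := not_lt.1 fun h => hminB _ h hcompl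
  rw [card_univ_sdiff, hcard, hB] at this
  omega

end HallViolator

open Classical in
theorem statement_3_general {V₁ V₂ : Type*} [Fintype V₁] [Fintype V₂]
    (n : ℕ) (hV₁ : Fintype.card V₁ = n) (hV₂ : Fintype.card V₂ = n)
    (E : V₁ → V₂ → Prop)
    (hdeg₁ : ∀ i : V₁, ∃ j : V₂, E i j) (hdeg₂ : ∀ j : V₂, ∃ i : V₁, E i j)
    (hnoPM : ¬ ∃ π : V₁ ≃ V₂, ∀ i, E i (π i)) :
    (∃ K : Finset V₁,
        (Finset.univ.filter fun j : V₂ => ∃ i ∈ K, E i j).card = K.card - 1 ∧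
        2 ≤ K.card ∧ K.card ≤ (n + 1) / 2 ∧
        ∀ j ∈ Finset.univ.filter fun j : V₂ => ∃ i ∈ K, E i j,
          2 ≤ (K.filter fun i => E i j).card) ∨
    (∃ K : Finset V₂,
        (Finset.univ.filter fun i : V₁ => ∃ j ∈ K, E i j).card = K.card - 1 ∧
        2 ≤ K.card ∧ K.card ≤ (n + 1) / 2 ∧
        ∀ i ∈ Finset.univ.filter fun i : V₁ => ∃ j ∈ K, E i j,
          2 ≤ (K.filter fun j => E i j).card) := by
  open HallViolator in
  obtain ⟨S, hS⟩ := exists_isViolator_of_not_exists_equiv (hV₁.trans hV₂.symm) hnoPM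
  rcases exists_isViolator_hallBelow hS with
    ⟨K, hK, hmin₁, hmin₂⟩ | ⟨K, hK, hmin₂, hmin₁⟩
  · exact .inl ⟨K, witness_of_hallBelow hV₁ hV₂ hdeg₁ hK hmin₁ hmin₂⟩
  · exact .inr ⟨K, witness_of_hallBelow hV₂ hV₁ hdeg₂ hK hmin₂ hmin₁⟩

open Classical in
/-- If a bipartite graph with parts of size `n ≥ 1` and no isolated vertices has
no perfect matching, there is a Hall witness `K` (on one of the two sides) with
`|Γ(K)| = |K| − 1`, `2 ≤ |K| ≤ ⌈n/2⌉`, and every vertex of `Γ(K)` having at least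
two neighbours in `K`. -/
theorem statement_3 {V₁ V₂ : Type*} [Fintype V₁] [Fintype V₂]
    (n : ℕ) (hn : 1 ≤ n) (hV₁ : Fintype.card V₁ = n) (hV₂ : Fintype.card V₂ = n)
    (E : V₁ → V₂ → Prop)
    (hdeg₁ : ∀ i : V₁, ∃ j : V₂, E i j) (hdeg₂ : ∀ j : V₂, ∃ i : V₁, E i j)
    (hnoPM : ¬ ∃ π : V₁ ≃ V₂, ∀ i, E i (π i)) :
    (∃ K : Finset V₁,
        (Finset.univ.filter fun j : V₂ => ∃ i ∈ K, E i j).card = K.card - 1 ∧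
        2 ≤ K.card ∧ K.card ≤ (n + 1) / 2 ∧
        ∀ j ∈ Finset.univ.filter fun j : V₂ => ∃ i ∈ K, E i j,
          2 ≤ (K.filter fun i => E i j).card) ∨
    (∃ K : Finset V₂,
        (Finset.univ.filter fun i : V₁ => ∃ j ∈ K, E i j).card = K.card - 1 ∧
        2 ≤ K.card ∧ K.card ≤ (n + 1) / 2 ∧
        ∀ i ∈ Finset.univ.filter fun i : V₁ => ∃ j ∈ K, E i j,
          2 ≤ (K.filter fun j => E i j).card) :=
  statement_3_general n hV₁ hV₂ E hdeg₁ hdeg₂ hnoPM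
end

section
/- Let m ≥ 0 be an integer and let ξ, ζ, w be nonnegative reals with ζ·w < 1. Then ∑_{k≥1} (w^{k−1}/(k−1)!) · ∑_{(u,v): 0 ≤ u(m+1) ≤ v ≤ k−1} ((k−1)_v / u!) · ξ^u · ζ^v = exp(w + ξ·(ζw)^{m+1}) / (1 − ζw), where all series converge absolutely. -/
open scoped Nat


/-- The generating-function identity: for `ξ, ζ, w ≥ 0` with `ζw < 1`,
`∑_{k≥1} (w^{k−1}/(k−1)!) ∑_{0 ≤ u(m+1) ≤ v ≤ k−1} ((k−1)_v/u!) ξ^u ζ^v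
  = exp(w + ξ(ζw)^{m+1})/(1−ζw)`,
the series converging (absolutely, as a series of nonnegative reals).
Here the outer sum is indexed by `k = j + 1`, `j : ℕ`, and `(k−1)_v` is the
falling factorial `Nat.descFactorial (k−1) v`. -/
theorem statement_5 (m : ℕ) (ξ ζ w : ℝ) (hξ : 0 ≤ ξ) (hζ : 0 ≤ ζ) (hw : 0 ≤ w)
    (h : ζ * w < 1) :
    HasSum
      (fun j : ℕ => w ^ j / (Nat.factorial j : ℝ) *
        ∑ v ∈ Finset.range (j + 1), ∑ u ∈ Finset.range (v + 1),
          if u * (m + 1) ≤ v then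
            ((Nat.descFactorial j v : ℝ) / (Nat.factorial u : ℝ)) * ξ ^ u * ζ ^ v
          else 0)
      (Real.exp (w + ξ * (ζ * w) ^ (m + 1)) / (1 - ζ * w)) := by
  set q : ℝ := ζ * w with hq
  have hq0 : (0:ℝ) ≤ q := mul_nonneg hζ hw
  -- exp series over ℝ
  have hexp : ∀ x : ℝ, HasSum (fun n : ℕ => x ^ n / n !) (Real.exp x) := by
    intro x
    rw [Real.exp_eq_exp_ℝ]
    exact NormedSpace.expSeries_div_hasSum_exp x
  have hA : HasSum (fun u : ℕ => (ξ * q ^ (m + 1)) ^ u / u !)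
      (Real.exp (ξ * q ^ (m + 1))) := hexp _
  have hB : HasSum (fun t : ℕ => q ^ t) (1 - q)⁻¹ := hasSum_geometric_of_lt_one hq0 h
  have hE : HasSum (fun i : ℕ => w ^ i / i !) (Real.exp w) := hexp w
  -- the inner double series, F (v, u)
  set F : ℕ × ℕ → ℝ := fun p =>
    if p.2 * (m + 1) ≤ p.1 then q ^ p.1 * (ξ ^ p.2 / p.2 !) else 0 with hF
  have hFnn : ∀ p, 0 ≤ F p := by
    intro p
    simp only [hF]
    split
    · positivity
    · exact le_rfl
  set S : ℝ := Real.exp (ξ * q ^ (m + 1)) * (1 - q)⁻¹ with hS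
  have hFsum : HasSum F S := by
    set e : ℕ × ℕ → ℕ × ℕ := fun p => (p.1 * (m + 1) + p.2, p.1) with he
    have hinj : Function.Injective e := by
      intro p p' hpp'
      simp only [he, Prod.mk.injEq] at hpp'
      obtain ⟨h1, h2⟩ := hpp'
      have : p.2 = p'.2 := by rw [h2] at h1; omega
      exact Prod.ext h2 this
    have hvanish : ∀ p, p ∉ Set.range e → F p = 0 := by
      intro p hp
      simp only [hF]
      rw [if_neg]
      intro hle
      exact hp ⟨(p.2, p.1 - p.2 * (m + 1)), by simp [he, Nat.add_sub_cancel' hle]⟩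
    rw [← hinj.hasSum_iff hvanish]
    have hcomp : (F ∘ e) = fun p : ℕ × ℕ =>
        ((ξ * q ^ (m + 1)) ^ p.1 / p.1 !) * q ^ p.2 := by
      funext p
      simp only [hF, he, Function.comp_apply, if_pos (Nat.le_add_right _ _)]
      rw [pow_add, pow_mul, mul_pow]
      ring
    rw [hcomp]
    exact hA.mul hB (hA.summable.mul_of_nonneg hB.summable
      (fun u => by positivity) (fun t => by positivity))
  -- fiberwise sums over u
  set c : ℕ → ℝ := fun v => ∑ u ∈ Finset.range (v + 1),
    if u * (m + 1) ≤ v then q ^ v * (ξ ^ u / u !) else 0 with hc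
  have hfib : ∀ v : ℕ, HasSum (fun u => F (v, u)) (c v) := by
    intro v
    apply hasSum_sum_of_ne_finset_zero
    intro u hu
    simp only [Finset.mem_range, not_lt] at hu
    simp only [hF]
    rw [if_neg]
    have : u ≤ u * (m + 1) := Nat.le_mul_of_pos_right u (Nat.succ_pos m)
    omega
  have hc_sum : HasSum c S := hFsum.prod_fiberwise hfib
  have hcnn : ∀ v, 0 ≤ c v := by
    intro v
    apply Finset.sum_nonneg
    intro u _
    split
    · positivity
    · exact le_rfl
  -- the product series over (i, v)
  have hG : HasSum (fun p : ℕ × ℕ => (w ^ p.1 / p.1 !) * c p.2) (Real.exp w * S) :=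
    hE.mul hc_sum (hE.summable.mul_of_nonneg hc_sum.summable
      (fun i => by positivity) hcnn)
  -- regroup by antidiagonals
  have hsigma : HasSum (fun j : ℕ => ∑ p ∈ Finset.HasAntidiagonal.antidiagonal j,
      (w ^ p.1 / (p.1 ! : ℝ)) * c p.2) (Real.exp w * S) := by
    have h1 : HasSum ((fun p : ℕ × ℕ => (w ^ p.1 / p.1 !) * c p.2) ∘
        Finset.HasAntidiagonal.sigmaAntidiagonalEquivProd) (Real.exp w * S) :=
      (Equiv.hasSum_iff _).2 hG
    exact h1.sigma fun j => (Finset.HasAntidiagonal.antidiagonal j).hasSum _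
  -- identify the fiber sums with the terms of the stated series
  have hterm : ∀ j : ℕ,
      (∑ p ∈ Finset.HasAntidiagonal.antidiagonal j, (w ^ p.1 / p.1 ! : ℝ) * c p.2) =
      w ^ j / (Nat.factorial j : ℝ) *
        ∑ v ∈ Finset.range (j + 1), ∑ u ∈ Finset.range (v + 1),
          if u * (m + 1) ≤ v then
            ((Nat.descFactorial j v : ℝ) / (Nat.factorial u : ℝ)) * ξ ^ u * ζ ^ v
          else 0 := by
    intro j
    rw [Finset.Nat.sum_antidiagonal_eq_sum_range_succ_mk, Finset.mul_sum]
    rw [← Finset.sum_range_reflect]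
    apply Finset.sum_congr rfl
    intro i hi
    simp only [Finset.mem_range, Nat.lt_succ_iff] at hi
    -- i plays the role of v; p = (j - i, i) vs term at reflected index
    have hsub : j - (j - i) = i := by omega
    simp only [Nat.succ_sub_one]
    rw [hsub]
    simp only [hc]
    rw [Finset.mul_sum, Finset.mul_sum]
    apply Finset.sum_congr rfl
    intro u _
    rcases le_or_gt (u * (m + 1)) i with hcond | hcond
    · rw [if_pos hcond, if_pos hcond]
      have hfact : ((j - i)! : ℝ) * (Nat.descFactorial j i : ℝ) = (j ! : ℝ) := by
        rw [← Nat.cast_mul, Nat.factorial_mul_descFactorial hi]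
      have h1 : ((j - i)! : ℝ) ≠ 0 := Nat.cast_ne_zero.2 (Nat.factorial_ne_zero _)
      have h2 : ((j : ℕ)! : ℝ) ≠ 0 := Nat.cast_ne_zero.2 (Nat.factorial_ne_zero _)
      have h3 : ((u : ℕ)! : ℝ) ≠ 0 := Nat.cast_ne_zero.2 (Nat.factorial_ne_zero _)
      have hwpow : w ^ (j - i) * w ^ i = w ^ j := by
        rw [← pow_add]
        congr 1
        omega
      have hd : (Nat.descFactorial j i : ℝ) = (j ! : ℝ) / ((j - i)! : ℝ) := by
        rw [eq_div_iff h1, mul_comm]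
        exact_mod_cast hfact
      rw [hd, hq, mul_pow]
      field_simp
      rw [← hwpow]
      ring
    · rw [if_neg (not_le.2 hcond), if_neg (not_le.2 hcond), mul_zero, mul_zero]
  -- combine
  have hfinal : Real.exp w * S = Real.exp (w + ξ * q ^ (m + 1)) / (1 - q) := by
    rw [hS, Real.exp_add, div_eq_mul_inv, mul_assoc]
  rw [← hfinal]
  simpa only [hterm] using hsigma
end

section
/- Fix an integer m ≥ 1. Then there exists a constant C > 0 such that for all n ≥ 2, the probability that B_{n,m} simultaneously has a perfect matching and is not connected is at most C·n^{−2m/(m+1)}. -/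
open Finset Classical

def Ev (n m : ℕ) (S T : Finset (Fin n)) (ω : Omega n) : Prop :=
  (∀ i, ω.1 i ∈ T ↔ i ∈ S) ∧
  (∀ j, ω.2.2.1 j ∈ S ↔ j ∈ T) ∧
  (∀ i ∈ S, RowUnpopular n m ω i → ω.2.1 i ∈ T) ∧
  (∀ j ∈ T, ColUnpopular n m ω j → ω.2.2.2 j ∈ S)

lemma exists_Ev (n m : ℕ) (ω : Omega n) (hn : 1 ≤ n)
    (hPM : HasPerfectMatching n m ω) (hc : ¬ (BGraph n m ω).Connected) :
    ∃ S T : Finset (Fin n), S.card = T.card ∧ 1 ≤ S.card ∧ 2 * S.card ≤ n ∧ Ev n m S T ω := by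
  classical
  have hne : Nonempty (Fin n ⊕ Fin n) := ⟨Sum.inl ⟨0, hn⟩⟩
  rw [SimpleGraph.connected_iff] at hc
  push_neg at hc
  have hpc : ¬ (BGraph n m ω).Preconnected := fun h => (hc h).false (Classical.choice hne)
  rw [SimpleGraph.Preconnected] at hpc
  push_neg at hpc
  obtain ⟨u, v, huv⟩ := hpc
  set G := BGraph n m ω with hG
  set S : Finset (Fin n) := univ.filter (fun i => G.Reachable (Sum.inl i) u) with hS
  set T : Finset (Fin n) := univ.filter (fun j => G.Reachable (Sum.inr j) u) with hT
  have hmemS : ∀ i, i ∈ S ↔ G.Reachable (Sum.inl i) u := by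
    intro i; simp [hS]
  have hmemT : ∀ j, j ∈ T ↔ G.Reachable (Sum.inr j) u := by
    intro j; simp [hT]
  have hadj : ∀ i j, IsEdge n m ω i j → G.Adj (Sum.inl i) (Sum.inr j) := fun i j h => h
  have key : ∀ i j, IsEdge n m ω i j → (i ∈ S ↔ j ∈ T) := by
    intro i j he
    rw [hmemS, hmemT]
    exact ⟨fun hr => ((hadj i j he).symm.reachable).trans hr,
           fun hr => ((hadj i j he).reachable).trans hr⟩
  -- edge iffs
  have key1 : ∀ i, ω.1 i ∈ T ↔ i ∈ S := fun i => (key i (ω.1 i) (Or.inl rfl)).symm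
  have key2 : ∀ j, ω.2.2.1 j ∈ S ↔ j ∈ T := fun j => key (ω.2.2.1 j) j (Or.inr (Or.inl rfl))
  have key3 : ∀ i, RowUnpopular n m ω i → (ω.2.1 i ∈ T ↔ i ∈ S) := fun i h =>
    (key i (ω.2.1 i) (Or.inr (Or.inr (Or.inl ⟨h, rfl⟩)))).symm
  have key4 : ∀ j, ColUnpopular n m ω j → (ω.2.2.2 j ∈ S ↔ j ∈ T) := fun j h =>
    key (ω.2.2.2 j) j (Or.inr (Or.inr (Or.inr ⟨h, rfl⟩)))
  -- cards
  obtain ⟨π, hπ⟩ := hPM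
  have keyπ : ∀ i, i ∈ S ↔ π i ∈ T := fun i => key i (π i) (hπ i)
  have hST : S.card = T.card := by
    have h1 : S.card ≤ T.card := card_le_card_of_injOn π
      (fun i hi => (keyπ i).mp hi) (π.injective.injOn)
    have h2 : Sᶜ.card ≤ Tᶜ.card := card_le_card_of_injOn π
      (fun i hi => by
        simp only [mem_coe, mem_compl] at hi ⊢
        exact fun h => hi ((keyπ i).mpr h)) (π.injective.injOn)
    have e1 : Sᶜ.card = n - S.card := by simp [card_compl]
    have e2 : Tᶜ.card = n - T.card := by simp [card_compl]
    have := S.card_le_univ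
    have := T.card_le_univ
    simp only [Fintype.card_fin] at *
    omega
  -- nonemptiness
  have hSne : 1 ≤ S.card := by
    rw [Nat.one_le_iff_ne_zero, Ne, card_eq_zero, ← ne_eq, ← nonempty_iff_ne_empty]
    cases u with
    | inl i₀ => exact ⟨i₀, (hmemS i₀).mpr (SimpleGraph.Reachable.refl _)⟩
    | inr j₀ =>
        refine ⟨ω.2.2.1 j₀, (key2 j₀).mpr ?_⟩
        exact (hmemT j₀).mpr (SimpleGraph.Reachable.refl _)
  have hScne : 1 ≤ Sᶜ.card := by
    rw [Nat.one_le_iff_ne_zero, Ne, card_eq_zero, ← ne_eq, ← nonempty_iff_ne_empty]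
    cases v with
    | inl i₁ =>
        refine ⟨i₁, ?_⟩
        rw [mem_compl, hmemS]
        exact fun h => huv h.symm
    | inr j₁ =>
        refine ⟨ω.2.2.1 j₁, ?_⟩
        rw [mem_compl]
        intro h
        have : j₁ ∈ T := (key2 j₁).mp h
        rw [hmemT] at this
        exact huv this.symm
  have hcards : S.card ≤ n := by simpa using S.card_le_univ
  have hcardcompl : Sᶜ.card = n - S.card := by simp [card_compl]
  by_cases hhalf : 2 * S.card ≤ n
  · exact ⟨S, T, hST, hSne, hhalf,
      key1, key2,
      fun i hi hu => (key3 i hu).mpr hi,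
      fun j hj hu => (key4 j hu).mpr hj⟩
  · refine ⟨Sᶜ, Tᶜ, ?_, hScne, by omega, ?_, ?_, ?_, ?_⟩
    · have e2 : Tᶜ.card = n - T.card := by simp [card_compl]
      omega
    · intro i; simp only [mem_compl]; exact not_congr (key1 i)
    · intro j; simp only [mem_compl]; exact not_congr (key2 j)
    · intro i hi hu
      rw [mem_compl] at hi ⊢
      exact fun h => hi ((key3 i hu).mp h)
    · intro j hj hu
      rw [mem_compl] at hj ⊢
      exact fun h => hj ((key4 j hu).mp h)

lemma count_restrict (n : ℕ) (D : Fin n → Finset (Fin n)) :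
    (univ.filter fun f : Fin n → Fin n => ∀ i, f i ∈ D i).card = ∏ i, (D i).card := by
  classical
  rw [← Fintype.card_piFinset]
  congr 1
  ext f
  simp [Fintype.mem_piFinset]

lemma count_iff (n : ℕ) (S T : Finset (Fin n)) :
    (univ.filter fun f : Fin n → Fin n => ∀ i, f i ∈ T ↔ i ∈ S).card
      = T.card ^ S.card * (n - T.card) ^ (n - S.card) := by
  classical
  have h : (univ.filter fun f : Fin n → Fin n => ∀ i, f i ∈ T ↔ i ∈ S)
      = univ.filter fun f : Fin n → Fin n => ∀ i, f i ∈ (if i ∈ S then T else Tᶜ) := by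
    apply filter_congr
    intro f _
    constructor
    · intro h i
      by_cases hi : i ∈ S <;> simp [hi, mem_compl, h i]
    · intro h i
      have := h i
      by_cases hi : i ∈ S <;> simp [hi, mem_compl] at this <;> simp [hi, this]
  rw [h, count_restrict]
  rw [← prod_mul_prod_compl S]
  have h1 : ∏ i ∈ S, (if i ∈ S then T else Tᶜ).card = T.card ^ S.card := by
    rw [prod_congr rfl (fun i hi => by rw [if_pos hi]), prod_const]
  have h2 : ∏ i ∈ Sᶜ, (if i ∈ S then T else Tᶜ).card = (n - T.card) ^ (n - S.card) := by
    rw [prod_congr rfl (fun i hi => by rw [if_neg (mem_compl.mp hi)]), prod_const,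
      card_compl, card_compl]
    simp
  rw [h1, h2]

lemma count_partial (n : ℕ) (U T : Finset (Fin n)) :
    (univ.filter fun f : Fin n → Fin n => ∀ i ∈ U, f i ∈ T).card
      = T.card ^ U.card * n ^ (n - U.card) := by
  classical
  have h : (univ.filter fun f : Fin n → Fin n => ∀ i ∈ U, f i ∈ T)
      = univ.filter fun f : Fin n → Fin n => ∀ i, f i ∈ (if i ∈ U then T else univ) := by
    apply filter_congr
    intro f _
    constructor
    · intro h i
      by_cases hi : i ∈ U <;> simp [hi, h i]
    · intro h i hi
      have := h i
      rwa [if_pos hi] at this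
  rw [h, count_restrict, ← prod_mul_prod_compl U]
  have h1 : ∏ i ∈ U, (if i ∈ U then T else univ).card = T.card ^ U.card := by
    rw [prod_congr rfl (fun i hi => by rw [if_pos hi]), prod_const]
  have h2 : ∏ i ∈ Uᶜ, (if i ∈ U then T else univ).card = n ^ (n - U.card) := by
    rw [prod_congr rfl (fun i hi => by rw [if_neg (mem_compl.mp hi)]), prod_const,
      card_compl]
    simp
  rw [h1, h2]

lemma pigeonhole_unpop (n m : ℕ) (S T : Finset (Fin n)) (f : Fin n → Fin n)
    (hA : ∀ i, f i ∈ T ↔ i ∈ S) (hST : S.card = T.card) :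
    S.card - S.card / (m + 1)
      ≤ (T.filter fun j => (univ.filter fun i => f i = j).card ≤ m).card := by
  classical
  have hsum : S.card = ∑ j ∈ T, (univ.filter fun i => f i = j).card := by
    have hSfil : (univ.filter fun i => f i ∈ T) = S := by
      ext i; simp [hA i]
    have := card_eq_sum_card_fiberwise
      (f := f) (s := univ.filter fun i => f i ∈ T) (t := T)
      (fun x hx => (mem_filter.mp hx).2)
    rw [hSfil] at this
    rw [this]
    apply sum_congr rfl
    intro j hj
    congr 1
    ext i
    simp only [mem_filter, mem_univ, true_and]
    exact ⟨fun h => h.2, fun h => ⟨(hA i).mp (by rw [h]; exact hj), h⟩⟩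
  have hsplit := card_filter_add_card_filter_not
    (s := T) (p := fun j => (univ.filter fun i => f i = j).card ≤ m)
  set Pop := T.filter fun j => ¬ ((univ.filter fun i => f i = j).card ≤ m) with hPop
  have hpople : Pop.card * (m + 1) ≤ S.card := by
    calc Pop.card * (m + 1) = Pop.card • (m + 1) := by simp
    _ ≤ ∑ j ∈ Pop, (univ.filter fun i => f i = j).card := by
        apply card_nsmul_le_sum
        intro j hj
        have := (mem_filter.mp hj).2
        omega
    _ ≤ ∑ j ∈ T, (univ.filter fun i => f i = j).card :=
        sum_le_sum_of_subset (filter_subset _ _)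
    _ = S.card := hsum.symm
  have hdiv : Pop.card ≤ S.card / (m + 1) :=
    (Nat.le_div_iff_mul_le (Nat.succ_pos m)).mpr hpople
  have h1 : Pop.card ≤ T.card := card_le_card (filter_subset _ _)
  omega

lemma pow_mono_bound (a n t u : ℕ) (ha : a ≤ n) (htu : t ≤ u) (hun : u ≤ n) :
    a ^ u * n ^ (n - u) ≤ a ^ t * n ^ (n - t) := by
  have h1 : a ^ u = a ^ t * a ^ (u - t) := by rw [← pow_add]; congr 1; omega
  calc a ^ u * n ^ (n - u) = a ^ t * (a ^ (u - t) * n ^ (n - u)) := by rw [h1]; ring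
  _ ≤ a ^ t * (n ^ (u - t) * n ^ (n - u)) :=
      Nat.mul_le_mul_left _ (Nat.mul_le_mul_right _ (Nat.pow_le_pow_left ha _))
  _ = a ^ t * n ^ (n - t) := by rw [← pow_add]; congr 2; omega

lemma count_Ev (n m : ℕ) (S T : Finset (Fin n)) (hST : S.card = T.card) :
    (univ.filter (Ev n m S T)).card ≤
      (S.card ^ S.card * (n - S.card) ^ (n - S.card)) ^ 2 *
        (S.card ^ (S.card - S.card / (m + 1)) * n ^ (n - (S.card - S.card / (m + 1)))) ^ 2 := by
  classical
  have hkn : S.card ≤ n := by simpa using S.card_le_univ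
  have hfib := card_eq_sum_card_fiberwise
    (f := fun ω : Omega n => (ω.1, ω.2.2.1)) (s := univ.filter (Ev n m S T))
    (t := (univ : Finset ((Fin n → Fin n) × (Fin n → Fin n)))) (fun x _ => mem_univ _)
  rw [hfib]
  have hbound : ∀ p : (Fin n → Fin n) × (Fin n → Fin n),
      ((univ.filter (Ev n m S T)).filter fun ω => (ω.1, ω.2.2.1) = p).card ≤
        (if (∀ i, p.1 i ∈ T ↔ i ∈ S) ∧ (∀ j, p.2 j ∈ S ↔ j ∈ T)
          then (S.card ^ (S.card - S.card / (m + 1)) * n ^ (n - (S.card - S.card / (m + 1)))) *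
            (S.card ^ (S.card - S.card / (m + 1)) * n ^ (n - (S.card - S.card / (m + 1)))) else 0) := by
    intro p
    by_cases hp : (∀ i, p.1 i ∈ T ↔ i ∈ S) ∧ (∀ j, p.2 j ∈ S ↔ j ∈ T)
    · rw [if_pos hp]
      set UR := S.filter (fun i => (univ.filter fun j => p.2 j = i).card ≤ m) with hUR
      set UC := T.filter (fun j => (univ.filter fun i => p.1 i = j).card ≤ m) with hUC
      have hcard1 : ((univ.filter (Ev n m S T)).filter fun ω => (ω.1, ω.2.2.1) = p).card ≤
          ((univ.filter fun f₂ : Fin n → Fin n => ∀ i ∈ UR, f₂ i ∈ T) ×ˢ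
            (univ.filter fun g₂ : Fin n → Fin n => ∀ j ∈ UC, g₂ j ∈ S)).card := by
        apply card_le_card_of_injOn (fun ω => (ω.2.1, ω.2.2.2))
        · intro ω hω
          simp only [mem_coe, mem_filter, mem_univ, true_and] at hω
          obtain ⟨⟨hEv1, hEv2, hEv3, hEv4⟩, hpq⟩ := hω
          subst hpq
          rw [mem_coe, mem_product, mem_filter, mem_filter]
          refine ⟨⟨mem_univ _, ?_⟩, mem_univ _, ?_⟩
          · intro i hi
            rw [hUR, mem_filter] at hi
            exact hEv3 i hi.1 hi.2
          · intro j hj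
            rw [hUC, mem_filter] at hj
            exact hEv4 j hj.1 hj.2
        · intro ω hω ω' hω' heq
          simp only [coe_filter, Set.mem_setOf_eq, mem_univ, true_and] at hω hω'
          have hpp := hω.2.trans hω'.2.symm
          obtain ⟨a, b, c, d⟩ := ω
          obtain ⟨a', b', c', d'⟩ := ω'
          simp only [Prod.mk.injEq] at hpp heq ⊢
          exact ⟨hpp.1, heq.1, hpp.2, heq.2⟩
      refine hcard1.trans ?_
      rw [card_product, count_partial, count_partial]
      have hURcard : S.card - S.card / (m + 1) ≤ UR.card := by
        have h := pigeonhole_unpop n m T S p.2 hp.2 hST.symm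
        rw [← hST] at h
        exact h
      have hUCcard : S.card - S.card / (m + 1) ≤ UC.card :=
        pigeonhole_unpop n m S T p.1 hp.1 hST
      have hURn : UR.card ≤ n := by simpa using UR.card_le_univ
      have hUCn : UC.card ≤ n := by simpa using UC.card_le_univ
      have b1 : T.card ^ UR.card * n ^ (n - UR.card) ≤
          S.card ^ (S.card - S.card / (m + 1)) * n ^ (n - (S.card - S.card / (m + 1))) := by
        rw [← hST]
        exact pow_mono_bound S.card n _ UR.card hkn hURcard hURn
      have b2 : S.card ^ UC.card * n ^ (n - UC.card) ≤
          S.card ^ (S.card - S.card / (m + 1)) * n ^ (n - (S.card - S.card / (m + 1))) :=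
        pow_mono_bound S.card n _ UC.card hkn hUCcard hUCn
      exact Nat.mul_le_mul b1 b2
    · rw [if_neg hp, Nat.le_zero, card_eq_zero, eq_empty_iff_forall_notMem]
      intro ω hω
      simp only [mem_filter, mem_univ, true_and] at hω
      obtain ⟨⟨hEv1, hEv2, _, _⟩, hpq⟩ := hω
      subst hpq
      exact hp ⟨hEv1, hEv2⟩
  calc ∑ p : (Fin n → Fin n) × (Fin n → Fin n),
        ((univ.filter (Ev n m S T)).filter fun ω => (ω.1, ω.2.2.1) = p).card
      ≤ ∑ p : (Fin n → Fin n) × (Fin n → Fin n),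
        (if (∀ i, p.1 i ∈ T ↔ i ∈ S) ∧ (∀ j, p.2 j ∈ S ↔ j ∈ T)
          then (S.card ^ (S.card - S.card / (m + 1)) * n ^ (n - (S.card - S.card / (m + 1)))) *
            (S.card ^ (S.card - S.card / (m + 1)) * n ^ (n - (S.card - S.card / (m + 1)))) else 0) :=
        sum_le_sum (fun p _ => hbound p)
    _ = (univ.filter fun p : (Fin n → Fin n) × (Fin n → Fin n) =>
          (∀ i, p.1 i ∈ T ↔ i ∈ S) ∧ (∀ j, p.2 j ∈ S ↔ j ∈ T)).card *
          ((S.card ^ (S.card - S.card / (m + 1)) * n ^ (n - (S.card - S.card / (m + 1)))) *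
            (S.card ^ (S.card - S.card / (m + 1)) * n ^ (n - (S.card - S.card / (m + 1))))) := by
        rw [sum_ite, sum_const, sum_const_zero, add_zero, smul_eq_mul]
    _ ≤ _ := by
        have hfp : (univ.filter fun p : (Fin n → Fin n) × (Fin n → Fin n) =>
            (∀ i, p.1 i ∈ T ↔ i ∈ S) ∧ (∀ j, p.2 j ∈ S ↔ j ∈ T)) =
            (univ.filter fun f : Fin n → Fin n => ∀ i, f i ∈ T ↔ i ∈ S) ×ˢ
            (univ.filter fun g : Fin n → Fin n => ∀ j, g j ∈ S ↔ j ∈ T) := by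
          ext p
          simp [mem_product]
        rw [hfp, card_product, count_iff, count_iff, ← hST]
        apply le_of_eq
        ring

lemma choose_bound (n k : ℕ) (hk : k ≤ n) :
    n.choose k * (k ^ k * (n - k) ^ (n - k)) ≤ n ^ n := by
  have h := add_pow k (n - k) n
  have hkn : k + (n - k) = n := by omega
  rw [hkn] at h
  calc n.choose k * (k ^ k * (n - k) ^ (n - k))
      = k ^ k * (n - k) ^ (n - k) * n.choose k := by ring
    _ ≤ ∑ j ∈ Finset.range (n + 1), k ^ j * (n - k) ^ (n - j) * n.choose j := by
        apply single_le_sum (f := fun j => k ^ j * (n - k) ^ (n - j) * n.choose j)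
        · intro j _; positivity
        · simp [Nat.lt_succ_iff, hk]
    _ = n ^ n := h.symm

lemma sq_mul_two_pow_le (k : ℕ) : k ^ 2 * 2 ^ k ≤ 4 * 3 ^ k := by
  induction k with
  | zero => decide
  | succ k ih =>
    by_cases h5 : k < 5
    · interval_cases k <;> decide
    · push_neg at h5
      calc (k + 1) ^ 2 * 2 ^ (k + 1) = 2 * (k + 1) ^ 2 * 2 ^ k := by ring
        _ ≤ 3 * k ^ 2 * 2 ^ k := by
            apply Nat.mul_le_mul_right
            nlinarith
        _ = 3 * (k ^ 2 * 2 ^ k) := by ring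
        _ ≤ 3 * (4 * 3 ^ k) := Nat.mul_le_mul_left _ ih
        _ = 4 * 3 ^ (k + 1) := by ring

lemma geom_34 (N : ℕ) : ∑ j ∈ Finset.range N, (3 / 4 : ℝ) ^ j ≤ 4 := by
  have h := geom_sum_eq (show (3/4 : ℝ) ≠ 1 by norm_num) N
  rw [h]
  have h0 : (0:ℝ) ≤ (3/4:ℝ)^N := by positivity
  have h1 : ((3/4:ℝ))^N ≤ 1 := pow_le_one₀ (by norm_num) (by norm_num)
  rw [div_le_iff_of_neg (by norm_num : (3/4 : ℝ) - 1 < 0)]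
  nlinarith

lemma sq_le_real (k : ℕ) : ((k : ℝ)) ^ 2 ≤ 4 * (3 / 2) ^ k := by
  have hc : ((k:ℝ)) ^ 2 * 2 ^ k ≤ 4 * 3 ^ k := by exact_mod_cast sq_mul_two_pow_le k
  have h2 : (0:ℝ) < 2 ^ k := by positivity
  rw [div_pow, ← mul_div_assoc, le_div_iff₀ h2]
  linarith [hc]

lemma scalar_bound (n k t : ℕ) (hn : 2 ≤ n) (hk1 : 1 ≤ k) (hk2 : 2 * k ≤ n)
    (ht1 : k ≤ 2 * t) (ht2 : 2 ≤ 2 * t) :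
    ((k : ℝ) / n) ^ (2 * t) ≤ 16 * (3 / 4) ^ k / (n : ℝ) ^ 2 := by
  have hn0 : (0:ℝ) < n := by positivity
  set x := (k : ℝ) / n with hx
  have hx0 : 0 ≤ x := by positivity
  have hx1 : x ≤ 1 / 2 := by
    rw [hx, div_le_iff₀ hn0]
    have : (2:ℝ) * k ≤ n := by exact_mod_cast hk2
    linarith
  have hxle1 : x ≤ 1 := hx1.trans (by norm_num)
  have hx2 : x ^ 2 = (k : ℝ) ^ 2 / (n : ℝ) ^ 2 := div_pow _ _ 2
  rcases le_or_gt 2 k with h2k | h2k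
  · have h : x ^ (2 * t) ≤ x ^ k := pow_le_pow_of_le_one hx0 hxle1 ht1
    refine h.trans ?_
    have hxk : x ^ k = x ^ 2 * x ^ (k - 2) := by rw [← pow_add]; congr 1; omega
    have hsmall : x ^ (k - 2) ≤ (1/2 : ℝ) ^ (k - 2) := pow_le_pow_left₀ hx0 hx1 _
    have hhalf : (1/2 : ℝ) ^ (k - 2) = 4 * (1/2) ^ k := by
      have h4 : (1/2 : ℝ) ^ (k - 2) * (1/2) ^ 2 = (1/2) ^ k := by
        rw [← pow_add]; congr 1; omega
      norm_num at h4
      linarith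
    have hk2' : (k : ℝ) ^ 2 ≤ 4 * (3/2) ^ k := sq_le_real k
    have hpos1 : (0:ℝ) ≤ (1/2:ℝ) ^ (k - 2) := by positivity
    have hmul : ((3/2 : ℝ)) ^ k * ((1/2 : ℝ)) ^ k = (3/4 : ℝ) ^ k := by
      rw [← mul_pow]; norm_num
    calc x ^ k = x ^ 2 * x ^ (k - 2) := hxk
      _ ≤ x ^ 2 * (1/2 : ℝ) ^ (k - 2) := by
          apply mul_le_mul_of_nonneg_left hsmall (by positivity)
      _ = ((k : ℝ) ^ 2 / (n : ℝ) ^ 2) * (4 * (1/2) ^ k) := by rw [hx2, hhalf]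
      _ ≤ ((4 * (3/2) ^ k) / (n : ℝ) ^ 2) * (4 * (1/2) ^ k) := by
          gcongr
      _ = 16 * (3/4) ^ k / (n : ℝ) ^ 2 := by
          field_simp
          rw [← hmul]
          ring
  · have hk1' : k = 1 := by omega
    subst hk1'
    have h : x ^ (2 * t) ≤ x ^ 2 := pow_le_pow_of_le_one hx0 hxle1 ht2
    refine h.trans ?_
    rw [hx2]
    have : (1:ℝ) ≤ 16 * (3/4) := by norm_num
    rw [div_le_div_iff₀ (by positivity) (by positivity)]
    nlinarith

lemma per_k (m n k : ℕ) (hm : 1 ≤ m) (hn : 2 ≤ n) (hk1 : 1 ≤ k) (hk2 : 2 * k ≤ n) :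
    ((n.choose k ^ 2 * ((k ^ k * (n - k) ^ (n - k)) ^ 2 *
        (k ^ (k - k / (m + 1)) * n ^ (n - (k - k / (m + 1)))) ^ 2) : ℕ) : ℝ)
      ≤ (16 * (3 / 4) ^ k / (n : ℝ) ^ 2) * ((n : ℝ)) ^ (4 * n) := by
  set t := k - k / (m + 1) with htdef
  have hkn : k ≤ n := by omega
  have hq : k / (m + 1) ≤ k / 2 := Nat.div_le_div_left (by omega) (by norm_num)
  have hqk : k / (m + 1) ≤ k := Nat.div_le_self _ _
  have ht1 : k ≤ 2 * t := by omega
  have ht2 : 2 ≤ 2 * t := by omega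
  have htn : t ≤ n := le_trans (Nat.sub_le _ _) hkn
  have hn0 : (0:ℝ) < (n:ℝ) := by positivity
  set a : ℕ := n.choose k * (k ^ k * (n - k) ^ (n - k)) with ha
  set d : ℕ := k ^ t * n ^ (n - t) with hd
  have hnat : n.choose k ^ 2 * ((k ^ k * (n - k) ^ (n - k)) ^ 2 *
      (k ^ t * n ^ (n - t)) ^ 2) = a ^ 2 * d ^ 2 := by rw [ha, hd]; ring
  rw [hnat]
  have haR : (a : ℝ) ≤ (n:ℝ) ^ n := by
    have := choose_bound n k hkn
    calc (a:ℝ) ≤ ((n ^ n : ℕ) : ℝ) := by exact_mod_cast this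
    _ = (n:ℝ) ^ n := by push_cast; ring
  have hdR : (d : ℝ) = (n:ℝ) ^ n * ((k:ℝ) / n) ^ t := by
    have hsplit : (n:ℝ) ^ n = (n:ℝ) ^ t * (n:ℝ) ^ (n - t) := by
      rw [← pow_add]; congr 1; omega
    rw [hd]
    push_cast
    rw [div_pow, hsplit]
    have hnt : ((n:ℝ) ^ t) ≠ 0 := by positivity
    field_simp
  have hscalar := scalar_bound n k t hn hk1 hk2 ht1 ht2
  have ha0 : (0:ℝ) ≤ (a:ℝ) := Nat.cast_nonneg a
  calc ((a ^ 2 * d ^ 2 : ℕ) : ℝ) = (a:ℝ)^2 * (d:ℝ)^2 := by push_cast; ring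
    _ ≤ ((n:ℝ)^n)^2 * ((n:ℝ)^n * ((k:ℝ)/n)^t)^2 := by
        apply mul_le_mul
        · exact pow_le_pow_left₀ ha0 haR 2
        · rw [hdR]
        · positivity
        · positivity
    _ = (n:ℝ)^(4*n) * (((k:ℝ)/n))^(2*t) := by
        rw [mul_pow, ← pow_mul, ← pow_mul, ← mul_assoc, ← pow_add]
        congr 1
        · congr 1; omega
        · congr 1; omega
    _ ≤ (n:ℝ)^(4*n) * (16 * (3/4)^k / (n:ℝ)^2) := by
        apply mul_le_mul_of_nonneg_left hscalar (by positivity)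
    _ = (16 * (3/4)^k / (n:ℝ)^2) * (n:ℝ)^(4*n) := by ring


def Bnat (m n k : ℕ) : ℕ :=
  (k ^ k * (n - k) ^ (n - k)) ^ 2 *
    (k ^ (k - k / (m + 1)) * n ^ (n - (k - k / (m + 1)))) ^ 2

lemma per_k' (m n k : ℕ) (hm : 1 ≤ m) (hn : 2 ≤ n) (hk1 : 1 ≤ k) (hk2 : 2 * k ≤ n) :
    ((n.choose k ^ 2 * Bnat m n k : ℕ) : ℝ)
      ≤ (16 * (3 / 4) ^ k / (n : ℝ) ^ 2) * ((n : ℝ)) ^ (4 * n) :=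
  per_k m n k hm hn hk1 hk2

/-- For `m ≥ 1`, the probability that `B_{n,m}` has a perfect matching and yet is not
connected is at most `C·n^{−2m/(m+1)}`. -/
theorem statement_14 (m : ℕ) (hm : 1 ≤ m) :
    ∃ C : ℝ, 0 < C ∧ ∀ n : ℕ, 2 ≤ n →
      pr n (fun ω => HasPerfectMatching n m ω ∧ ¬ (BGraph n m ω).Connected)
        ≤ C * (n : ℝ) ^ (-(2 * (m : ℝ) / ((m : ℝ) + 1))) := by
  classical
  refine ⟨64, by norm_num, ?_⟩
  intro n hn
  have hn0 : (0:ℝ) < (n:ℝ) := by positivity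
  -- the collection of candidate pairs
  set pairs : Finset (Finset (Fin n) × Finset (Fin n)) :=
    univ.filter (fun p => p.1.card = p.2.card ∧ 1 ≤ p.1.card ∧ 2 * p.1.card ≤ n) with hpairs
  have hsub : (univ.filter fun ω : Omega n =>
      HasPerfectMatching n m ω ∧ ¬ (BGraph n m ω).Connected)
      ⊆ pairs.biUnion (fun p => univ.filter (Ev n m p.1 p.2)) := by
    intro ω hω
    rw [mem_filter] at hω
    obtain ⟨S, T, h1, h2, h3, h4⟩ := exists_Ev n m ω (by omega) hω.2.1 hω.2.2
    rw [mem_biUnion]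
    refine ⟨(S, T), ?_, ?_⟩
    · rw [hpairs, mem_filter]; exact ⟨mem_univ _, h1, h2, h3⟩
    · rw [mem_filter]; exact ⟨mem_univ _, h4⟩
  have hcard1 : (univ.filter fun ω : Omega n =>
      HasPerfectMatching n m ω ∧ ¬ (BGraph n m ω).Connected).card
      ≤ ∑ p ∈ pairs, (univ.filter (Ev n m p.1 p.2)).card :=
    le_trans (card_le_card hsub) card_biUnion_le
  have hcard2 : ∑ p ∈ pairs, (univ.filter (Ev n m p.1 p.2)).card
      ≤ ∑ p ∈ pairs, Bnat m n p.1.card := by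
    apply sum_le_sum
    intro p hp
    rw [hpairs, mem_filter] at hp
    exact count_Ev n m p.1 p.2 hp.2.1
  have hmaps : ∀ p ∈ pairs, p.1.card ∈ range (n + 1) := by
    intro p _
    rw [mem_range]
    have := p.1.card_le_univ
    simp only [card_univ, Fintype.card_fin] at this
    omega
  have hgroup : ∑ p ∈ pairs, Bnat m n p.1.card
      = ∑ j ∈ range (n + 1), ∑ p ∈ pairs.filter (fun p => p.1.card = j),
          Bnat m n p.1.card :=
    (sum_fiberwise_of_maps_to hmaps _).symm
  have hinner : ∀ j ∈ range (n + 1),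
      ∑ p ∈ pairs.filter (fun p => p.1.card = j), Bnat m n p.1.card
        ≤ (if 1 ≤ j ∧ 2 * j ≤ n then n.choose j ^ 2 * Bnat m n j else 0) := by
    intro j _
    by_cases hc : 1 ≤ j ∧ 2 * j ≤ n
    · rw [if_pos hc]
      have heq : ∑ p ∈ pairs.filter (fun p => p.1.card = j), Bnat m n p.1.card
          = (pairs.filter (fun p => p.1.card = j)).card * Bnat m n j := by
        rw [sum_congr rfl (fun p hp => by rw [(mem_filter.mp hp).2]), sum_const,
          smul_eq_mul]
      rw [heq]
      apply Nat.mul_le_mul_right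
      have hss : pairs.filter (fun p => p.1.card = j)
          ⊆ (powersetCard j (univ : Finset (Fin n))) ×ˢ (powersetCard j univ) := by
        intro p hp
        rw [mem_filter] at hp
        obtain ⟨hp1, hp2⟩ := hp
        rw [hpairs, mem_filter] at hp1
        rw [mem_product, mem_powersetCard, mem_powersetCard]
        exact ⟨⟨subset_univ _, hp2⟩, subset_univ _, by rw [← hp1.2.1, hp2]⟩
      calc (pairs.filter (fun p => p.1.card = j)).card
          ≤ ((powersetCard j (univ : Finset (Fin n))) ×ˢ (powersetCard j univ)).card :=
            card_le_card hss
        _ = n.choose j ^ 2 := by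
            rw [card_product, card_powersetCard, card_univ, Fintype.card_fin, sq]
    · rw [if_neg hc]
      have hem : pairs.filter (fun p => p.1.card = j) = ∅ := by
        rw [eq_empty_iff_forall_notMem]
        intro p hp
        rw [mem_filter] at hp
        obtain ⟨hp1, hp2⟩ := hp
        rw [hpairs, mem_filter] at hp1
        exact hc ⟨by omega, by rw [← hp2]; exact hp1.2.2.2⟩
      rw [hem, sum_empty]
  have hnat : (univ.filter fun ω : Omega n =>
      HasPerfectMatching n m ω ∧ ¬ (BGraph n m ω).Connected).card
      ≤ ∑ j ∈ range (n + 1),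
          (if 1 ≤ j ∧ 2 * j ≤ n then n.choose j ^ 2 * Bnat m n j else 0) :=
    le_trans hcard1 (le_trans hcard2 (le_of_eq hgroup |>.trans (sum_le_sum hinner)))
  -- move to the reals
  have hNeq : ((Fintype.card (Omega n) : ℕ) : ℝ) = (n:ℝ) ^ (4 * n) := by
    have h1 : Fintype.card (Omega n) = n ^ n * (n ^ n * (n ^ n * n ^ n)) := by
      simp [Fintype.card_prod, Fintype.card_fun, Fintype.card_fin]
    rw [h1]
    push_cast
    rw [← pow_add, ← pow_add, ← pow_add]
    congr 1
    ring
  have hNpos : (0:ℝ) < ((Fintype.card (Omega n) : ℕ) : ℝ) := by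
    rw [hNeq]; positivity
  rw [pr]
  rw [Finset.filter_congr_decidable]
  have hchain : ((univ.filter fun ω : Omega n =>
      HasPerfectMatching n m ω ∧ ¬ (BGraph n m ω).Connected).card : ℝ)
        / (Fintype.card (Omega n) : ℝ)
      ≤ 64 / (n:ℝ) ^ 2 := by
    calc ((univ.filter fun ω : Omega n =>
        HasPerfectMatching n m ω ∧ ¬ (BGraph n m ω).Connected).card : ℝ)
          / (Fintype.card (Omega n) : ℝ)
        ≤ ((∑ j ∈ range (n + 1),
            (if 1 ≤ j ∧ 2 * j ≤ n then n.choose j ^ 2 * Bnat m n j else 0) : ℕ) : ℝ)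
              / (Fintype.card (Omega n) : ℝ) := by
          have := (Nat.cast_le (α := ℝ)).mpr hnat
          gcongr
      _ = ∑ j ∈ range (n + 1),
            ((if 1 ≤ j ∧ 2 * j ≤ n then n.choose j ^ 2 * Bnat m n j else 0 : ℕ) : ℝ)
              / (Fintype.card (Omega n) : ℝ) := by
          rw [Nat.cast_sum, sum_div]
      _ ≤ ∑ j ∈ range (n + 1), 16 * (3 / 4 : ℝ) ^ j / (n:ℝ) ^ 2 := by
          apply sum_le_sum
          intro j _
          by_cases hc : 1 ≤ j ∧ 2 * j ≤ n
          · rw [if_pos hc, div_le_iff₀ hNpos, hNeq]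
            exact per_k' m n j hm hn hc.1 hc.2
          · rw [if_neg hc]
            simp only [Nat.cast_zero, zero_div]
            positivity
      _ = (16 / (n:ℝ) ^ 2) * ∑ j ∈ range (n + 1), (3 / 4 : ℝ) ^ j := by
          rw [mul_sum]
          apply sum_congr rfl
          intro j _
          ring
      _ ≤ (16 / (n:ℝ) ^ 2) * 4 := by
          apply mul_le_mul_of_nonneg_left (geom_34 (n + 1)) (by positivity)
      _ = 64 / (n:ℝ) ^ 2 := by ring
  refine hchain.trans ?_
  -- final rpow comparison
  have h1n : (1:ℝ) ≤ (n:ℝ) := by exact_mod_cast (by omega : 1 ≤ n)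
  have hexp : (-2 : ℝ) ≤ -(2 * (m:ℝ) / ((m:ℝ) + 1)) := by
    rw [neg_le_neg_iff, div_le_iff₀ (by positivity)]
    have : (0:ℝ) ≤ (m:ℝ) := Nat.cast_nonneg m
    linarith
  have hrle : (n:ℝ) ^ (-2 : ℝ) ≤ (n:ℝ) ^ (-(2 * (m:ℝ) / ((m:ℝ) + 1))) :=
    Real.rpow_le_rpow_of_exponent_le h1n hexp
  have hr2 : (n:ℝ) ^ (-2 : ℝ) = 1 / (n:ℝ) ^ 2 := by
    rw [show (-2 : ℝ) = -((2:ℕ) : ℝ) by norm_num, Real.rpow_neg (le_of_lt hn0),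
      Real.rpow_natCast, one_div]
  calc (64:ℝ) / (n:ℝ) ^ 2 = 64 * (1 / (n:ℝ) ^ 2) := by ring
    _ = 64 * (n:ℝ) ^ (-2 : ℝ) := by rw [hr2]
    _ ≤ 64 * (n:ℝ) ^ (-(2 * (m:ℝ) / ((m:ℝ) + 1))) := by
        apply mul_le_mul_of_nonneg_left hrle (by norm_num)
end

section
/- For every z ∈ (0, 1]: 2(1−z)·log z + z·(log(1 − e^{−1/z}) − e^{-1}) ≤ −0.648. That is, the supremum over z ∈ (0,1] of the function 2(1−z)log z + z(log(1−e^{−1/z}) − e^{-1}) is at most −0.648. -/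
open Real Finset

/-- Lower bound on `exp (1/3)` via Taylor partial sum. -/
lemma exp_third_gt : (1.395612421 : ℝ) ≤ Real.exp (1/3) := by
  have h := Real.sum_le_exp_of_nonneg (x := (1/3 : ℝ)) (by norm_num) 8
  refine le_trans ?_ h
  simp only [Finset.sum_range_succ, Finset.sum_range_zero, Nat.factorial]
  norm_num

/-- Upper bound on `exp (1/3)` via Taylor with remainder. -/
lemma exp_third_lt : Real.exp (1/3) ≤ 1.3956124255 := by
  have h := Real.exp_bound' (x := (1/3 : ℝ)) (by norm_num) (by norm_num) (n := 8) (by norm_num)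
  refine le_trans h ?_
  simp only [Finset.sum_range_succ, Finset.sum_range_zero, Nat.factorial]
  norm_num

/-- Upper bound on `exp (153/500)`. -/
lemma exp_306_lt : Real.exp (153/500) ≤ 1.35798231 := by
  have h := Real.exp_bound' (x := (153/500 : ℝ)) (by norm_num) (by norm_num) (n := 8) (by norm_num)
  refine le_trans h ?_
  simp only [Finset.sum_range_succ, Finset.sum_range_zero, Nat.factorial]
  norm_num

/-- Bounds on `x₀ = exp (-(4/3))`. -/
lemma x0_bounds : (0.2635971 : ℝ) ≤ Real.exp (-(4/3)) ∧ Real.exp (-(4/3)) ≤ 0.2635972 := by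
  have h1 : Real.exp (-(4/3)) = (Real.exp 1 * Real.exp (1/3))⁻¹ := by
    rw [← Real.exp_add, ← Real.exp_neg]; norm_num
  have he1 : (2.7182818283 : ℝ) < Real.exp 1 := Real.exp_one_gt_d9
  have he2 : Real.exp 1 < 2.7182818286 := Real.exp_one_lt_d9
  have h3 := exp_third_gt
  have h4 := exp_third_lt
  have hpos : (0:ℝ) < Real.exp 1 * Real.exp (1/3) := by positivity
  constructor
  · rw [h1, le_inv_comm₀ (by norm_num) hpos]
    calc Real.exp 1 * Real.exp (1/3) ≤ 2.7182818286 * 1.3956124255 := by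
          apply mul_le_mul he2.le h4 (Real.exp_pos _).le (by norm_num)
      _ ≤ (0.2635971 : ℝ)⁻¹ := by norm_num
  · rw [h1, inv_le_comm₀ hpos (by norm_num)]
    calc (0.2635972 : ℝ)⁻¹ ≤ 2.7182818283 * 1.395612421 := by norm_num
      _ ≤ Real.exp 1 * Real.exp (1/3) := by
          apply mul_le_mul he1.le h3 (by norm_num) (Real.exp_pos _).le

/-- Lower bound on `y₀ = exp (-(153/500))`. -/
lemma y0_lb : (0.7363866 : ℝ) ≤ Real.exp (-(153/500)) := by
  rw [Real.exp_neg, le_inv_comm₀ (by norm_num) (Real.exp_pos _)]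
  calc Real.exp (153/500) ≤ 1.35798231 := exp_306_lt
    _ ≤ (0.7363866 : ℝ)⁻¹ := by norm_num

/-- Quartic upper bound for `log` on `(0,1]`. -/
lemma log_le_quartic {z : ℝ} (h0 : 0 < z) (h1 : z ≤ 1) :
    Real.log z ≤ (z-1) - (z-1)^2/2 + (z-1)^3/3 - (z-1)^4/4 := by
  set F : ℝ → ℝ := fun t => ((t-1) - (t-1)^2/2 + (t-1)^3/3 - (t-1)^4/4) - Real.log t with hF
  have key : AntitoneOn F (Set.Icc z 1) := by
    have hderiv : ∀ t ∈ Set.Ioo z 1, HasDerivAt F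
        ((1 - (t-1) + (t-1)^2 - (t-1)^3) - t⁻¹) t := by
      intro t ht
      have htpos : 0 < t := lt_trans h0 ht.1
      have hp : HasDerivAt (fun t : ℝ => (t-1) - (t-1)^2/2 + (t-1)^3/3 - (t-1)^4/4)
          (1 - (t-1) + (t-1)^2 - (t-1)^3) t := by
        have hid : HasDerivAt (fun t : ℝ => t - 1) 1 t := (hasDerivAt_id t).sub_const 1
        have h2 := (hid.pow 2).div_const 2
        have h3 := (hid.pow 3).div_const 3
        have h4 := (hid.pow 4).div_const 4
        have := ((hid.sub h2).add h3).sub h4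
        refine this.congr_deriv ?_
        push_cast
        ring
      have hl : HasDerivAt Real.log t⁻¹ t := Real.hasDerivAt_log (ne_of_gt htpos)
      exact hp.sub hl
    apply antitoneOn_of_deriv_nonpos (convex_Icc z 1)
    · apply ContinuousOn.sub
      · fun_prop
      · apply Real.continuousOn_log.mono
        intro t ht
        exact ne_of_gt (lt_of_lt_of_le h0 ht.1)
    · intro t ht
      rw [interior_Icc] at ht
      exact ((hderiv t ht).differentiableAt).differentiableWithinAt
    · intro t ht
      rw [interior_Icc] at ht
      have hd := hderiv t ht
      rw [hd.deriv]
      have htpos : 0 < t := lt_trans h0 ht.1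
      rw [sub_nonpos, ← sub_nonneg]
      have : t⁻¹ - ((1 - (t-1) + (t-1)^2 - (t-1)^3)) = (t-1)^4 / t := by
        field_simp
        ring
      rw [this]
      positivity
  have h01 : F 1 ≤ F z := key (Set.mem_Icc.2 ⟨le_refl z, h1⟩) (Set.mem_Icc.2 ⟨h1, le_refl 1⟩) h1
  have hF1 : F 1 = 0 := by simp [hF]
  rw [hF1] at h01
  simp only [hF] at h01
  linarith

set_option maxHeartbeats 1000000 in
/-- For every `z ∈ (0,1]`,
`2(1−z)·log z + z·(log(1 − e^{−1/z}) − e⁻¹) ≤ −0.648`. -/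
theorem statement_15 (z : ℝ) (h0 : 0 < z) (h1 : z ≤ 1) :
    2 * (1 - z) * Real.log z +
        z * (Real.log (1 - Real.exp (-1 / z)) - Real.exp (-1)) ≤ -0.648 := by
  have hxlo := x0_bounds.1
  have hxhi := x0_bounds.2
  have hylo := y0_lb
  have hy0pos : (0:ℝ) < Real.exp (-(153/500)) := Real.exp_pos _
  -- y = 1 - exp(-1/z) > 0
  have hexp_lt_one : Real.exp (-1/z) < 1 := by
    rw [Real.exp_lt_one_iff]
    exact div_neg_of_neg_of_pos (by norm_num) h0
  have hypos : 0 < 1 - Real.exp (-1/z) := by linarith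
  -- Step 1: quartic bound on log z
  have hQ : Real.log z ≤ (z-1) - (z-1)^2/2 + (z-1)^3/3 - (z-1)^4/4 := log_le_quartic h0 h1
  have hstep1 : 2 * (1 - z) * Real.log z ≤
      2 * (1 - z) * ((z-1) - (z-1)^2/2 + (z-1)^3/3 - (z-1)^4/4) := by
    apply mul_le_mul_of_nonneg_left hQ
    linarith
  -- Step 2: tangent bound on log y at y₀ = exp(-153/500)
  have hstep2 : Real.log (1 - Real.exp (-1/z)) ≤
      -(153/500) + ((1 - Real.exp (-1/z)) - Real.exp (-(153/500))) / Real.exp (-(153/500)) := by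
    have hdiv : Real.log ((1 - Real.exp (-1/z)) / Real.exp (-(153/500))) ≤
        (1 - Real.exp (-1/z)) / Real.exp (-(153/500)) - 1 :=
      Real.log_le_sub_one_of_pos (by positivity)
    rw [Real.log_div (ne_of_gt hypos) (ne_of_gt hy0pos), Real.log_exp] at hdiv
    have : ((1 - Real.exp (-1/z)) - Real.exp (-(153/500))) / Real.exp (-(153/500))
        = (1 - Real.exp (-1/z)) / Real.exp (-(153/500)) - 1 := by
      field_simp
    rw [this]
    linarith
  -- Step 3: exp tangent: exp(-1/z) ≥ exp(-4/3) * (7/3 - 1/z)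
  have hstep3 : Real.exp (-(4/3)) * (7/3 - 1/z) ≤ Real.exp (-1/z) := by
    have h := Real.add_one_le_exp (4/3 - 1/z)
    have : Real.exp (-1/z) = Real.exp (-(4/3)) * Real.exp (4/3 - 1/z) := by
      rw [← Real.exp_add]; ring_nf
    rw [this]
    have hx0pos : (0:ℝ) < Real.exp (-(4/3)) := Real.exp_pos _
    have := mul_le_mul_of_nonneg_left h hx0pos.le
    calc Real.exp (-(4/3)) * (7/3 - 1/z) = Real.exp (-(4/3)) * (4/3 - 1/z + 1) := by ring
      _ ≤ Real.exp (-(4/3)) * Real.exp (4/3 - 1/z) := this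
  -- combine step 2 and 3: bound z * log y
  have hzexp : Real.exp (-(4/3)) * ((7/3) * z - 1) ≤ z * Real.exp (-1/z) := by
    have := mul_le_mul_of_nonneg_left hstep3 h0.le
    calc Real.exp (-(4/3)) * ((7/3) * z - 1) = z * (Real.exp (-(4/3)) * (7/3 - 1/z)) := by
          field_simp
      _ ≤ z * Real.exp (-1/z) := this
  -- numerator bound: z - z*exp(-1/z) ≤ z*(1 - 7/3*0.2635971) + 0.2635972
  have hnum : z - z * Real.exp (-1/z) ≤ z * (1 - (7/3) * 0.2635971) + 0.2635972 := by
    have h1' : z - z * Real.exp (-1/z) ≤ z - Real.exp (-(4/3)) * ((7/3) * z - 1) := by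
      linarith
    have h2' : z - Real.exp (-(4/3)) * ((7/3) * z - 1)
        = z * (1 - (7/3) * Real.exp (-(4/3))) + Real.exp (-(4/3)) := by ring
    rw [h2'] at h1'
    have h3' : z * (1 - (7/3) * Real.exp (-(4/3))) ≤ z * (1 - (7/3) * 0.2635971) :=
      mul_le_mul_of_nonneg_left (by linarith) h0.le
    linarith
  have hnum_nonneg : (0:ℝ) ≤ z * (1 - (7/3) * 0.2635971) + 0.2635972 := by nlinarith
  -- z * log y ≤ -653/500 z + (z(1-7/3*xlo)+xhi)/ylo
  have hzlogy : z * Real.log (1 - Real.exp (-1/z)) ≤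
      -(653/500) * z + (z * (1 - (7/3) * 0.2635971) + 0.2635972) / 0.7363866 := by
    have h2' := mul_le_mul_of_nonneg_left hstep2 h0.le
    have h3' : z * (-(153/500) + ((1 - Real.exp (-1/z)) - Real.exp (-(153/500))) / Real.exp (-(153/500)))
        = -(153/500) * z - z + (z - z * Real.exp (-1/z)) / Real.exp (-(153/500)) := by
      field_simp
      ring
    rw [h3'] at h2'
    have h4' : (z - z * Real.exp (-1/z)) / Real.exp (-(153/500)) ≤
        (z * (1 - (7/3) * 0.2635971) + 0.2635972) / 0.7363866 :=
      div_le_div₀ hnum_nonneg hnum (by norm_num) hylo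
    have heq : -(153/500) * z - z = -(653/500) * z := by ring
    linarith
  -- step 4 : -z exp(-1) ≤ -z * 0.36787944116
  have he1 : (0.36787944116 : ℝ) < Real.exp (-1) := Real.exp_neg_one_gt_d9
  have hstep4 : -(z * Real.exp (-1)) ≤ -(z * 0.36787944116) := by
    have := mul_le_mul_of_nonneg_left he1.le h0.le
    linarith
  -- assemble
  have hfinal : 2 * (1 - z) * Real.log z + z * (Real.log (1 - Real.exp (-1/z)) - Real.exp (-1)) ≤
      2 * (1 - z) * ((z-1) - (z-1)^2/2 + (z-1)^3/3 - (z-1)^4/4)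
      + (-(653/500) * z + (z * (1 - (7/3) * 0.2635971) + 0.2635972) / 0.7363866)
      - z * 0.36787944116 := by
    have expand : z * (Real.log (1 - Real.exp (-1/z)) - Real.exp (-1))
        = z * Real.log (1 - Real.exp (-1/z)) - z * Real.exp (-1) := by ring
    rw [expand]
    linarith
  refine le_trans hfinal ?_
  -- final polynomial inequality via explicit certificate
  have hg : (0:ℝ) ≤ 337978244441933/62500000000000 - (70525279561/15000000000) * z
      + (360331/150000) * z^2 - z^3/2 := by
    nlinarith [mul_nonneg (mul_nonneg h0.le h0.le) (sub_nonneg.2 h1)]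
  have hint : (0:ℝ) ≤ (z - 38223/50000)^2 * (337978244441933/62500000000000
      - (70525279561/15000000000) * z + (360331/150000) * z^2 - z^3/2) :=
    mul_nonneg (sq_nonneg _) hg
  have hid : (2 * (1 - z) * ((z-1) - (z-1)^2/2 + (z-1)^3/3 - (z-1)^4/4)
      + (-(653/500) * z + (z * (1 - (7/3) * 0.2635971) + 0.2635972) / 0.7363866)
      - z * 0.36787944116 + 0.648)
    + (z - 38223/50000)^2 * (337978244441933/62500000000000 - (70525279561/15000000000) * z
      + (360331/150000) * z^2 - z^3/2)
    + ((-11999775261350093453/9204832500000000000000000) * (z - 38223/50000)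
       + 1101041688889181569296635981/2301208125000000000000000000000) = 0 := by
    ring
  linarith [hid, hint]
end

section
/- Fix an integer m ≥ 1 and let γ_m = 1 + e^{-1}·∑_{j=0}^{m} 1/j! − log 2. Define, for n ≥ 2, t ∈ (0, 1/2] and positive reals x, y, z, ρ: f(t)=t·e^{t−1}; q_s(w)=∑_{j=0}^{s} w^j/j!; p_s(t)=q_s(1−t); exp_s(x)=∑_{τ≥s} x^τ/τ!; η=y+z; g = (exp₁(η)+p_m(t)f(t)) / (exp₂(η)+(y·p_{m−1}(t)+z·p_m(t))·f(t)); and H_{n,m}(t;x,y,z,ρ) = −2t + (1−t)·log((1−p_m(t)f(t))/(1−t)) + t·log(1−t) + t·log((exp₂(η)+(y·p_{m−1}(t)+z·p_m(t))f(t))/(y·z)) + t·log(t·q_m(x)/(e·ρ)) + ρ + (z·exp_{m+1}(x)/q_m(x))·(g·ρ/(x(1−t)))^{m+1} − n^{-1}·log(1 − g·ρ/(x(1−t))). Then there exist ε₀ > 0, C > 0 and n₀ such that for all n ≥ n₀ and all t ∈ (0, ε₀], the choice x = y = z = t^{1/3}, ρ = t satisfies 0 < g·ρ/(x(1−t)) <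 1 and H_{n,m}(t; t^{1/3}, t^{1/3}, t^{1/3}, t) ≤ −γ_m·t + C·t^{4/3} + C·n^{-1}·t^{1/3}. Consequently min over positive (x,y,z,ρ) of H_{n,m}(t;x,y,z,ρ) is negative for t in [n^{−λ}, ε₀] for any fixed λ ∈ (1, 3/2) and n sufficiently large. -/
/-- `f(t) = t·e^{t−1}`. -/
noncomputable def fFun (t : ℝ) : ℝ := t * Real.exp (t - 1)

/-- `q_s(w) = ∑_{j=0}^{s} w^j/j!`; note `p_s(t) = q_s(1−t)`. -/
noncomputable def qFun (s : ℕ) (w : ℝ) : ℝ :=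
  ∑ j ∈ Finset.range (s + 1), w ^ j / (Nat.factorial j : ℝ)

/-- `g = (exp₁(η)+p_m(t)f(t)) / (exp₂(η)+(y·p_{m−1}(t)+z·p_m(t))·f(t))`, with
`η = y+z`, `exp₁(η) = e^η − 1`, `exp₂(η) = e^η − 1 − η`. -/
noncomputable def gFun (m : ℕ) (t y z : ℝ) : ℝ :=
  (Real.exp (y + z) - 1 + qFun m (1 - t) * fFun t) /
    (Real.exp (y + z) - 1 - (y + z) +
      (y * qFun (m - 1) (1 - t) + z * qFun m (1 - t)) * fFun t)

/-- The function `H_{n,m}(t; x, y, z, ρ)` of \eqref{13n2}, with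
`exp_{m+1}(x) = e^x − q_m(x)`. -/
noncomputable def HFun (n m : ℕ) (t x y z ρ : ℝ) : ℝ :=
  -2 * t + (1 - t) * Real.log ((1 - qFun m (1 - t) * fFun t) / (1 - t))
    + t * Real.log (1 - t)
    + t * Real.log ((Real.exp (y + z) - 1 - (y + z) +
        (y * qFun (m - 1) (1 - t) + z * qFun m (1 - t)) * fFun t) / (y * z))
    + t * Real.log (t * qFun m x / (Real.exp 1 * ρ)) + ρ
    + (z * (Real.exp x - qFun m x) / qFun m x) *
        (gFun m t y z * ρ / (x * (1 - t))) ^ (m + 1)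
    - (n : ℝ)⁻¹ * Real.log (1 - gFun m t y z * ρ / (x * (1 - t)))

open Finset Real

lemma one_le_qFun (m : ℕ) {w : ℝ} (hw : 0 ≤ w) : 1 ≤ qFun m w := by
  have h0 : (0:ℕ) ∈ Finset.range (m+1) := by simp
  have := Finset.single_le_sum (f := fun j => w ^ j / (Nat.factorial j : ℝ))
    (fun i _ => by positivity) h0
  simpa [qFun] using this

lemma qFun_le_exp (m : ℕ) {w : ℝ} (hw : 0 ≤ w) : qFun m w ≤ Real.exp w :=
  Real.sum_le_exp_of_nonneg hw (m+1)

lemma qFun_le_three (m : ℕ) {w : ℝ} (hw : 0 ≤ w) (hw1 : w ≤ 1) : qFun m w ≤ 3 := by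
  refine le_trans (qFun_le_exp m hw) (le_trans (Real.exp_le_exp.mpr hw1) ?_)
  linarith [Real.exp_one_lt_d9]

lemma one_add_le_qFun (m : ℕ) (hm : 1 ≤ m) {w : ℝ} (hw : 0 ≤ w) : 1 + w ≤ qFun m w := by
  have hsub : Finset.range 2 ⊆ Finset.range (m+1) := Finset.range_subset_range.mpr (by omega)
  have h := Finset.sum_le_sum_of_subset_of_nonneg hsub
    (f := fun j => w ^ j / (Nat.factorial j : ℝ)) (fun i _ _ => by positivity)
  have h2 : ∑ j ∈ Finset.range 2, w ^ j / (Nat.factorial j : ℝ) = 1 + w := by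
    simp [Finset.sum_range_succ, Nat.factorial]
  unfold qFun
  rw [h2] at h
  exact h

lemma qFun_one_sub_ge (m : ℕ) {t : ℝ} (ht : 0 ≤ t) (ht1 : t ≤ 1) :
    qFun m 1 - ((m:ℝ)+1)^2 * t ≤ qFun m (1 - t) := by
  have key : qFun m 1 - qFun m (1 - t) ≤ ((m:ℝ)+1)^2 * t := by
    unfold qFun
    rw [← Finset.sum_sub_distrib]
    have hterm : ∀ j ∈ Finset.range (m+1),
        (1:ℝ) ^ j / (Nat.factorial j : ℝ) - (1-t) ^ j / (Nat.factorial j : ℝ)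
          ≤ ((m:ℝ)+1) * t := by
      intro j hj
      have hj' : (j:ℝ) ≤ m := by exact_mod_cast Nat.lt_succ_iff.mp (Finset.mem_range.mp hj)
      have hb : 1 + (j:ℝ) * (-t) ≤ (1 + (-t)) ^ j := one_add_mul_le_pow (by linarith) j
      have hfact : (1:ℝ) ≤ (Nat.factorial j : ℝ) := by exact_mod_cast Nat.one_le_iff_ne_zero.mpr (Nat.factorial_ne_zero j)
      have hpow : (1-t)^j ≤ 1 := pow_le_one₀ (by linarith) (by linarith)
      have h1 : (1:ℝ)^j / (Nat.factorial j : ℝ) - (1-t)^j / (Nat.factorial j : ℝ)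
          = (1 - (1-t)^j) / (Nat.factorial j : ℝ) := by rw [one_pow]; ring
      rw [h1]
      have hnum : 1 - (1-t)^j ≤ ((m:ℝ)+1) * t := by
        have : 1 - (1-t)^j ≤ (j:ℝ) * t := by
          rw [show (1:ℝ)-t = 1+(-t) by ring]
          linarith [hb]
        nlinarith [ht]
      have hnum0 : 0 ≤ 1 - (1-t)^j := by linarith
      calc (1 - (1-t)^j) / (Nat.factorial j : ℝ) ≤ (1 - (1-t)^j) / 1 :=
            div_le_div_of_nonneg_left hnum0 (by norm_num) hfact |>.trans_eq rfl
        _ = 1 - (1-t)^j := by ring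
        _ ≤ ((m:ℝ)+1) * t := hnum
    have := Finset.sum_le_sum hterm
    calc _ ≤ ∑ _j ∈ Finset.range (m+1), ((m:ℝ)+1) * t := this
      _ = ((m:ℝ)+1) * (((m:ℝ)+1) * t) := by
          rw [Finset.sum_const, Finset.card_range]; push_cast; ring
      _ ≤ ((m:ℝ)+1)^2 * t := by ring_nf; rfl
  linarith

lemma exp_le_quad {x : ℝ} (h0 : 0 ≤ x) (h1 : x ≤ 1) : Real.exp x ≤ 1 + x + x^2 := by
  have h := Real.exp_bound (x := x) (by rw [abs_of_nonneg h0]; exact h1) (n := 2) (by norm_num)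
  rw [abs_of_nonneg h0] at h
  simp only [Finset.sum_range_succ, Finset.sum_range_zero, Nat.factorial] at h
  norm_num at h
  have := abs_le.mp h
  nlinarith [this.2, pow_le_one₀ h0 h1 (n := 2)]

lemma exp_le_cubic {x : ℝ} (h0 : 0 ≤ x) (h1 : x ≤ 1) :
    Real.exp x ≤ 1 + x + x^2/2 + x^3 := by
  have h := Real.exp_bound (x := x) (by rw [abs_of_nonneg h0]; exact h1) (n := 3) (by norm_num)
  rw [abs_of_nonneg h0] at h
  simp only [Finset.sum_range_succ, Finset.sum_range_zero, Nat.factorial] at h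
  norm_num at h
  have := abs_le.mp h
  nlinarith [this.2]

lemma quad_le_exp {x : ℝ} (hx : 0 ≤ x) : 1 + x + x^2/2 ≤ Real.exp x := by
  have h := Real.sum_le_exp_of_nonneg hx 3
  simp only [Finset.sum_range_succ, Finset.sum_range_zero, Nat.factorial] at h
  norm_num at h
  linarith

lemma neg_log_one_sub_le {u : ℝ} (h0 : 0 ≤ u) (h1 : u ≤ 1/2) :
    -Real.log (1-u) ≤ u + 2*u^2 := by
  have hpos : 0 < 1 - u := by linarith
  have h2 := Real.one_sub_inv_le_log_of_pos hpos
  have hinv : (1-u)⁻¹ ≤ 1 + u + 2*u^2 := by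
    rw [inv_le_iff_one_le_mul₀ hpos]
    nlinarith
  linarith

set_option maxHeartbeats 1000000 in
lemma key (m : ℕ) (hm : 1 ≤ m) {s : ℝ} (hs : 0 < s) (hs1 : s ≤ 1/1000) (n : ℕ) :
    0 < gFun m (s^3) s s * s^3 / (s * (1 - s^3)) ∧
    gFun m (s^3) s s * s^3 / (s * (1 - s^3)) < 1 ∧
    HFun n m (s^3) s s s (s^3) ≤
      -(gammaConst m) * s^3 + (((m:ℝ)+1)^2 + 100) * (s^3 * s)
        + (((m:ℝ)+1)^2 + 100) * (n:ℝ)⁻¹ * s := by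
  have hs1' : s ≤ 1 := by linarith
  have h1s : (0:ℝ) ≤ 1 - s := by linarith
  have h1s' : (0:ℝ) ≤ 1 + s := by linarith
  have ht : (0:ℝ) < s^3 := by positivity
  have hts : s^3 ≤ s := by
    linarith only [mul_nonneg (mul_nonneg hs.le h1s) h1s', hs.le]
  have ht1 : s^3 ≤ 1/1000 := le_trans hts hs1
  have h1t : (0:ℝ) < 1 - s^3 := by linarith
  have hss2 : s^2 ≤ s := by linarith only [mul_nonneg hs.le h1s]
  have hs4 : (0:ℝ) ≤ s^4 := by positivity
  have hs45 : s^5 ≤ s^4 := by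
    linarith only [mul_nonneg hs4 h1s]
  -- f bounds
  have hf0 : 0 ≤ fFun (s^3) := by unfold fFun; positivity
  have hfle : fFun (s^3) ≤ s^3 := by
    unfold fFun
    have h1 : Real.exp (s^3 - 1) ≤ 1 := Real.exp_le_one_iff.mpr (by linarith)
    linarith only [mul_le_mul_of_nonneg_left h1 ht.le]
  have hfge : (Real.exp 1)⁻¹ * s^3 ≤ fFun (s^3) := by
    unfold fFun
    rw [Real.exp_sub]
    have h1 : 1 ≤ Real.exp (s^3) := Real.one_le_exp ht.le
    rw [div_eq_mul_inv]
    have hi : 0 < (Real.exp 1)⁻¹ := inv_pos.mpr (Real.exp_pos 1)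
    linarith only [mul_le_mul_of_nonneg_left h1 (mul_nonneg ht.le hi.le)]
  -- q bounds
  have hw0 : (0:ℝ) ≤ 1 - s^3 := h1t.le
  have hw1 : (1:ℝ) - s^3 ≤ 1 := by linarith
  have hq1_lo : 1 ≤ qFun m (1 - s^3) := one_le_qFun m hw0
  have hq1_hi : qFun m (1 - s^3) ≤ 3 := qFun_le_three m hw0 hw1
  have hq0_lo : 1 ≤ qFun (m-1) (1 - s^3) := one_le_qFun _ hw0
  have hq0_hi : qFun (m-1) (1 - s^3) ≤ 3 := qFun_le_three _ hw0 hw1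
  -- exp (s+s) bounds
  have hss0 : (0:ℝ) ≤ s + s := by linarith
  have hss1 : s + s ≤ 1 := by linarith
  have hE_lo : 1 + (s+s) + (s+s)^2/2 ≤ Real.exp (s+s) := quad_le_exp hss0
  have hE_hi : Real.exp (s+s) ≤ 1 + (s+s) + (s+s)^2/2 + (s+s)^3 := exp_le_cubic hss0 hss1
  -- numerator and denominator of g
  obtain ⟨N, hN_def⟩ : ∃ x : ℝ, x = Real.exp (s+s) - 1 + qFun m (1 - s^3) * fFun (s^3) :=
    ⟨_, rfl⟩
  obtain ⟨D, hD_def⟩ : ∃ x : ℝ, x = Real.exp (s+s) - 1 - (s+s) +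
      (s * qFun (m-1) (1 - s^3) + s * qFun m (1 - s^3)) * fFun (s^3) := ⟨_, rfl⟩
  have hqf_lo : 0 ≤ qFun m (1 - s^3) * fFun (s^3) := mul_nonneg (by linarith) hf0
  have hqf_hi : qFun m (1 - s^3) * fFun (s^3) ≤ 3 * s^3 :=
    mul_le_mul hq1_hi hfle hf0 (by norm_num)
  have hp1 : 0 ≤ s * qFun (m-1) (1-s^3) * fFun (s^3) :=
    mul_nonneg (mul_nonneg hs.le (by linarith)) hf0
  have hp2 : 0 ≤ s * qFun m (1-s^3) * fFun (s^3) :=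
    mul_nonneg (mul_nonneg hs.le (by linarith)) hf0
  have hD_lo : 2*s^2 ≤ D := by
    rw [hD_def]; linarith only [hE_lo, hp1, hp2]
  have hD_pos : 0 < D := lt_of_lt_of_le (by positivity) hD_lo
  have h6 : s * qFun (m-1) (1-s^3) + s * qFun m (1-s^3) ≤ 6*s := by
    linarith only [mul_le_mul_of_nonneg_left hq0_hi hs.le, mul_le_mul_of_nonneg_left hq1_hi hs.le]
  have hD_hi : D ≤ 2*s^2 + 8*s^3 + 6*s^4 := by
    rw [hD_def]
    linarith only [hE_hi, mul_le_mul h6 hfle hf0 (by positivity : (0:ℝ) ≤ 6*s)]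
  have h11 : 11*s^3 ≤ s^2 := by
    linarith only [mul_nonneg (sq_nonneg s) (show (0:ℝ) ≤ 1-11*s by linarith)]
  have hN_lo : 0 < N := by
    rw [hN_def]; linarith only [hE_lo, hqf_lo, hs, sq_nonneg s]
  have hN_hi : N ≤ 2*s + 3*s^2 := by
    rw [hN_def]; linarith only [hE_hi, hqf_hi, h11]
  -- g and u
  have hg_eq : gFun m (s^3) s s = N / D := by rw [hN_def, hD_def]; rfl
  have hg_pos : 0 < gFun m (s^3) s s := by rw [hg_eq]; positivity
  have hden_pos : 0 < s * (1 - s^3) := by positivity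
  obtain ⟨u, hu_def⟩ : ∃ x : ℝ, x = gFun m (s^3) s s * s^3 / (s * (1 - s^3)) := ⟨_, rfl⟩
  rw [← hu_def]
  have hu_pos : 0 < u := by rw [hu_def]; positivity
  have hgs : gFun m (s^3) s s * s ≤ 3/2 := by
    rw [hg_eq, div_mul_eq_mul_div, div_le_iff₀ hD_pos]
    have h1 : N*s ≤ (2*s+3*s^2)*s := mul_le_mul_of_nonneg_right hN_hi hs.le
    have h2 : 3*s^3 ≤ s^2 := by linarith only [h11, pow_nonneg hs.le 3]
    linarith only [h1, h2, hD_lo]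
  have hu_le : u ≤ 2*s := by
    rw [hu_def, div_le_iff₀ hden_pos]
    have heq : gFun m (s^3) s s * s^3 = (gFun m (s^3) s s * s) * s^2 := by ring
    rw [heq]
    have h1 : (gFun m (s^3) s s * s) * s^2 ≤ 3/2*s^2 :=
      mul_le_mul_of_nonneg_right hgs (sq_nonneg s)
    have h2 : 4*s^5 ≤ s^2 := by
      linarith only [mul_nonneg (sq_nonneg s) (show (0:ℝ) ≤ 1-4*s^3 by linarith only [ht1])]
    linarith only [h1, h2]
  have hu_half : u ≤ 1/2 := by linarith
  have hu_lt1 : u < 1 := by linarith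
  refine ⟨hu_pos, hu_lt1, ?_⟩
  -- constants
  have hA0 : (0:ℝ) ≤ ((m:ℝ)+1)^2 := by positivity
  have hS_lo : (1:ℝ) ≤ qFun m 1 := one_le_qFun m (by norm_num)
  have hS_hi : qFun m 1 ≤ Real.exp 1 := qFun_le_exp m (by norm_num)
  have hepos := Real.exp_pos 1
  have hγ : gammaConst m = 1 + (Real.exp 1)⁻¹ * qFun m 1 - Real.log 2 := by
    unfold gammaConst qFun; simp
  -- T2
  have h1qf : 0 < 1 - qFun m (1-s^3) * fFun (s^3) := by
    linarith only [hqf_hi, ht1, hqf_lo]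
  have hlog1 : Real.log (1 - qFun m (1-s^3) * fFun (s^3)) ≤ -(qFun m (1-s^3) * fFun (s^3)) := by
    have := Real.log_le_sub_one_of_pos h1qf; linarith
  have hqf_ge : (Real.exp 1)⁻¹ * (qFun m 1) * s^3 - ((m:ℝ)+1)^2 * (s^3)^2
      ≤ qFun m (1-s^3) * fFun (s^3) := by
    have hq := qFun_one_sub_ge m ht.le (by linarith)
    have h1 := mul_le_mul_of_nonneg_right hq hf0
    have h2 := mul_le_mul_of_nonneg_left hfge (by linarith : (0:ℝ) ≤ qFun m 1)
    have h3 := mul_le_mul_of_nonneg_left hfle (mul_nonneg hA0 ht.le)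
    linarith only [h1, h2, h3]
  have hlog1t : -Real.log (1 - s^3) ≤ s^3 + 2*(s^3)^2 := neg_log_one_sub_le ht.le (by linarith)
  have hU : Real.log ((1 - qFun m (1-s^3) * fFun (s^3))/(1-s^3))
      ≤ (1 - (Real.exp 1)⁻¹*(qFun m 1))*s^3 + (((m:ℝ)+1)^2+2)*(s^3)^2 := by
    rw [Real.log_div (ne_of_gt h1qf) (ne_of_gt h1t)]
    linarith only [hlog1, hqf_ge, hlog1t]
  have hinvS : (Real.exp 1)⁻¹ * qFun m 1 ≤ 1 := by
    have := mul_le_mul_of_nonneg_left hS_hi (le_of_lt (inv_pos.mpr hepos))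
    rwa [inv_mul_cancel₀ (ne_of_gt hepos)] at this
  have hUpos : 0 ≤ (1 - (Real.exp 1)⁻¹*(qFun m 1))*s^3 + (((m:ℝ)+1)^2+2)*(s^3)^2 :=
    add_nonneg (mul_nonneg (by linarith) ht.le)
      (mul_nonneg (by linarith) (sq_nonneg _))
  have hT2 : (1-s^3) * Real.log ((1 - qFun m (1-s^3) * fFun (s^3))/(1-s^3))
      ≤ (1 - (Real.exp 1)⁻¹*(qFun m 1))*s^3 + (((m:ℝ)+1)^2+2)*(s^3)^2 := by
    have h1 := mul_le_mul_of_nonneg_left hU h1t.le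
    linarith only [h1, mul_nonneg ht.le hUpos]
  -- T3
  have hT3 : s^3 * Real.log (1-s^3) ≤ 0 :=
    mul_nonpos_iff.mpr (Or.inl ⟨ht.le, Real.log_nonpos hw0 hw1⟩)
  -- T4
  have hss_pos : (0:ℝ) < s*s := by positivity
  have hDs : D / (s*s) ≤ 2 + 9*s := by
    rw [div_le_iff₀ hss_pos]
    have h64 : 6*s^4 ≤ s^3 := by
      linarith only [mul_nonneg (pow_nonneg hs.le 3) (show (0:ℝ) ≤ 1-6*s by linarith)]
    linarith only [hD_hi, h64]
  have hDs_pos : 0 < D/(s*s) := div_pos hD_pos hss_pos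
  have hlogD : Real.log (D/(s*s)) ≤ Real.log 2 + 5*s := by
    have h2 : Real.log (D/(s*s)) = Real.log (D/(s*s)/2) + Real.log 2 := by
      rw [Real.log_div (ne_of_gt hDs_pos) (by norm_num)]; ring
    have h3 := Real.log_le_sub_one_of_pos (show (0:ℝ) < D/(s*s)/2 by positivity)
    rw [h2]; linarith only [h3, hDs, hs.le]
  have hT4 : s^3 * Real.log (D/(s*s)) ≤ s^3*Real.log 2 + 5*(s^3*s) := by
    linarith only [mul_le_mul_of_nonneg_left hlogD ht.le]
  -- T5
  have harg : s^3 * qFun m s / (Real.exp 1 * s^3) = qFun m s / Real.exp 1 := by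
    field_simp
  have hqs_lo : (1:ℝ) ≤ qFun m s := one_le_qFun m hs.le
  have hqs_hi : qFun m s ≤ 1 + s + s^2 :=
    le_trans (qFun_le_exp m hs.le) (exp_le_quad hs.le hs1')
  have hlogq : Real.log (qFun m s / Real.exp 1) ≤ 2*s - 1 := by
    rw [Real.log_div (by linarith) (ne_of_gt hepos), Real.log_exp]
    have h1 := Real.log_le_sub_one_of_pos (show (0:ℝ) < qFun m s by linarith)
    linarith only [h1, hqs_hi, hss2]
  have hT5 : s^3 * Real.log (s^3 * qFun m s / (Real.exp 1 * s^3)) ≤ -s^3 + 2*(s^3*s) := by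
    rw [harg]
    linarith only [mul_le_mul_of_nonneg_left hlogq ht.le]
  -- T7
  have hqs_lo2 : 1 + s ≤ qFun m s := one_add_le_qFun m hm hs.le
  have hnum7 : Real.exp s - qFun m s ≤ s^2 := by
    linarith only [exp_le_quad hs.le hs1', hqs_lo2]
  have hnum7' : 0 ≤ Real.exp s - qFun m s := by linarith [qFun_le_exp m hs.le]
  have hcoef : s * (Real.exp s - qFun m s) / qFun m s ≤ s^3 := by
    rw [div_le_iff₀ (by linarith : (0:ℝ) < qFun m s)]
    linarith only [mul_le_mul_of_nonneg_left hnum7 hs.le,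
      mul_le_mul_of_nonneg_left hqs_lo ht.le]
  have hcoef0 : 0 ≤ s * (Real.exp s - qFun m s) / qFun m s :=
    div_nonneg (mul_nonneg hs.le hnum7') (by linarith)
  have hupow : u^(m+1) ≤ u^2 := pow_le_pow_of_le_one hu_pos.le hu_lt1.le (by omega)
  have hupow0 : (0:ℝ) ≤ u^(m+1) := pow_nonneg hu_pos.le _
  have hu2 : u^2 ≤ 4*s^2 := by
    have h1 := mul_le_mul hu_le hu_le hu_pos.le (by positivity : (0:ℝ) ≤ 2*s)
    linarith only [h1]
  have hT7 : (s * (Real.exp s - qFun m s) / qFun m s) * u^(m+1) ≤ 4*(s^3*s) := by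
    have h1 : (s * (Real.exp s - qFun m s) / qFun m s) * u^(m+1) ≤ s^3 * (4*s^2) :=
      mul_le_mul hcoef (hupow.trans hu2) hupow0 ht.le
    linarith only [h1, hs45]
  -- T8
  have hT8 : -((n:ℝ)⁻¹ * Real.log (1-u)) ≤ 4*((n:ℝ)⁻¹*s) := by
    have hnl := neg_log_one_sub_le hu_pos.le hu_half
    have hn0 : (0:ℝ) ≤ (n:ℝ)⁻¹ := by positivity
    have hls : -Real.log (1-u) ≤ 4*s := by
      linarith only [hnl, hu_le, mul_le_mul_of_nonneg_left hu_half hu_pos.le]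
    calc -((n:ℝ)⁻¹ * Real.log (1-u)) = (n:ℝ)⁻¹ * (-Real.log (1-u)) := by ring
      _ ≤ (n:ℝ)⁻¹ * (4*s) := mul_le_mul_of_nonneg_left hls hn0
      _ = 4*((n:ℝ)⁻¹*s) := by ring
  -- combine
  unfold HFun
  rw [← hD_def, ← hu_def, hγ]
  have hsq : (((m:ℝ)+1)^2+2)*(s^3)^2 ≤ (((m:ℝ)+1)^2+2)*(s^3*s) := by
    have h1 : (s^3)^2 ≤ s^3*s := by
      linarith only [mul_nonneg (mul_nonneg hs4 h1s) h1s']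
    exact mul_le_mul_of_nonneg_left h1 (by linarith)
  have hrest1 : 0 ≤ ((m:ℝ)+1)^2*(s^3*s) := by positivity
  have hrest2 : 0 ≤ ((m:ℝ)+1)^2*((n:ℝ)⁻¹*s) := by positivity
  have hrest3 : 0 ≤ (n:ℝ)⁻¹*s := by positivity
  have hrest0 : 0 ≤ s^3*s := by positivity
  linarith only [hT2, hT3, hT4, hT5, hT7, hT8, hsq, hrest0, hrest1, hrest2, hrest3]

set_option maxHeartbeats 1000000 in
/-- For `m ≥ 1` there are `ε₀, C > 0` and `n₀` such that for all `n ≥ n₀` and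
`t ∈ (0, ε₀]`, the choice `x = y = z = t^{1/3}`, `ρ = t` satisfies
`0 < gρ/(x(1−t)) < 1` and `H_{n,m} ≤ −γ_m·t + C·t^{4/3} + C·n⁻¹·t^{1/3}`;
consequently, for any fixed `λ ∈ (1, 3/2)` and `n` large, the minimum of `H_{n,m}`
over positive `(x,y,z,ρ)` is negative for every `t ∈ [n^{−λ}, ε₀]`. -/
theorem statement_17 (m : ℕ) (hm : 1 ≤ m) :
    ∃ ε₀ : ℝ, 0 < ε₀ ∧
      (∃ C : ℝ, 0 < C ∧ ∃ n₀ : ℕ, ∀ n : ℕ, n₀ ≤ n → ∀ t : ℝ, 0 < t → t ≤ ε₀ →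
        0 < gFun m t (t ^ (1 / 3 : ℝ)) (t ^ (1 / 3 : ℝ)) * t /
            (t ^ (1 / 3 : ℝ) * (1 - t)) ∧
        gFun m t (t ^ (1 / 3 : ℝ)) (t ^ (1 / 3 : ℝ)) * t /
            (t ^ (1 / 3 : ℝ) * (1 - t)) < 1 ∧
        HFun n m t (t ^ (1 / 3 : ℝ)) (t ^ (1 / 3 : ℝ)) (t ^ (1 / 3 : ℝ)) t
          ≤ -(gammaConst m) * t + C * t ^ (4 / 3 : ℝ) + C * (n : ℝ)⁻¹ * t ^ (1 / 3 : ℝ)) ∧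
      (∀ lam : ℝ, 1 < lam → lam < 3 / 2 → ∃ n₁ : ℕ, ∀ n : ℕ, n₁ ≤ n → ∀ t : ℝ,
        (n : ℝ) ^ (-lam) ≤ t → t ≤ ε₀ →
        ∃ x y z ρ : ℝ, 0 < x ∧ 0 < y ∧ 0 < z ∧ 0 < ρ ∧
          gFun m t y z * ρ / (x * (1 - t)) < 1 ∧ HFun n m t x y z ρ < 0) := by
  have hm1 : (1:ℝ) ≤ (m:ℝ) := by exact_mod_cast hm
  obtain ⟨C, hC_def⟩ : ∃ x : ℝ, x = ((m:ℝ)+1)^2 + 100 := ⟨_, rfl⟩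
  have hC104 : (104:ℝ) ≤ C := by rw [hC_def]; nlinarith
  have hC_pos : (0:ℝ) < C := by linarith
  have hb_pos : (0:ℝ) < (10*C)⁻¹ := by positivity
  have hb_le : (10*C)⁻¹ ≤ 1/1000 := by
    have h1 : (1000:ℝ) ≤ 10*C := by linarith
    calc (10*C)⁻¹ ≤ (1000:ℝ)⁻¹ := by
          apply inv_anti₀ (by norm_num) h1
      _ = 1/1000 := by norm_num
  have main : ∀ n : ℕ, ∀ t : ℝ, 0 < t → t ≤ ((10*C)⁻¹)^3 →
      0 < gFun m t (t ^ (1 / 3 : ℝ)) (t ^ (1 / 3 : ℝ)) * t /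
          (t ^ (1 / 3 : ℝ) * (1 - t)) ∧
      gFun m t (t ^ (1 / 3 : ℝ)) (t ^ (1 / 3 : ℝ)) * t /
          (t ^ (1 / 3 : ℝ) * (1 - t)) < 1 ∧
      (t ^ (1/3:ℝ) ≤ (10*C)⁻¹) ∧
      HFun n m t (t ^ (1 / 3 : ℝ)) (t ^ (1 / 3 : ℝ)) (t ^ (1 / 3 : ℝ)) t
        ≤ -(gammaConst m) * t + C * (t * t ^ (1/3:ℝ)) + C * (n : ℝ)⁻¹ * t ^ (1/3:ℝ) := by
    intro n t ht htle
    have hs : 0 < t^(1/3:ℝ) := Real.rpow_pos_of_pos ht _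
    have hcube : (t^(1/3:ℝ))^3 = t := by
      rw [← Real.rpow_natCast (t^(1/3:ℝ)) 3, ← Real.rpow_mul ht.le]
      norm_num
    have hsle : t^(1/3:ℝ) ≤ (10*C)⁻¹ := by
      have h1 : t^(1/3:ℝ) ≤ (((10*C)⁻¹)^3)^(1/3:ℝ) :=
        Real.rpow_le_rpow ht.le htle (by norm_num)
      have h2 : ((((10*C))⁻¹)^3)^(1/3:ℝ) = (10*C)⁻¹ := by
        rw [← Real.rpow_natCast ((10*C)⁻¹) 3, ← Real.rpow_mul hb_pos.le]
        norm_num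
      linarith [h1, h2.le, h2.ge]
    have hsle' : t^(1/3:ℝ) ≤ 1/1000 := le_trans hsle hb_le
    obtain ⟨h1, h2, h3⟩ := key m hm hs hsle' n
    rw [hcube] at h1 h2 h3
    rw [← hC_def] at h3
    exact ⟨h1, h2, hsle, h3⟩
  refine ⟨((10*C)⁻¹)^3, by positivity, ⟨C, hC_pos, 0, ?_⟩, ?_⟩
  · intro n _ t ht htle
    obtain ⟨h1, h2, _, h3⟩ := main n t ht htle
    refine ⟨h1, h2, ?_⟩
    have e1 : t^(4/3:ℝ) = t * t^(1/3:ℝ) := by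
      rw [show (4/3:ℝ) = 1 + 1/3 by norm_num, Real.rpow_add ht, Real.rpow_one]
    rw [e1]
    exact h3
  · intro lam hl1 hl2
    have hδ : 0 < 1 - 2*lam/3 := by linarith
    have htend : Filter.Tendsto (fun n : ℕ => ((n:ℝ))^(1 - 2*lam/3))
        Filter.atTop Filter.atTop :=
      (tendsto_rpow_atTop hδ).comp tendsto_natCast_atTop_atTop
    obtain ⟨n₁, hn₁⟩ := Filter.eventually_atTop.mp (htend.eventually_ge_atTop (10*C))
    refine ⟨max n₁ 1, ?_⟩
    intro n hn t htlo htle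
    have hn1 : 1 ≤ n := le_trans (le_max_right _ _) hn
    have hnpos : (0:ℝ) < (n:ℝ) := by exact_mod_cast hn1
    have hne : (n:ℝ) ≠ 0 := ne_of_gt hnpos
    have ht0 : 0 < t := lt_of_lt_of_le (Real.rpow_pos_of_pos hnpos _) htlo
    have hs : 0 < t^(1/3:ℝ) := Real.rpow_pos_of_pos ht0 _
    obtain ⟨h1, h2, hsle, h3⟩ := main n t ht0 htle
    refine ⟨t^(1/3:ℝ), t^(1/3:ℝ), t^(1/3:ℝ), t, hs, hs, hs, ht0, h2, ?_⟩
    -- bound the two error terms by t/10 each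
    have h4 : C * t^(1/3:ℝ) ≤ 1/10 := by
      have hmul := mul_le_mul_of_nonneg_left hsle hC_pos.le
      have e : C*(10*C)⁻¹ = 1/10 := by field_simp
      linarith
    have h5 : C*(t*t^(1/3:ℝ)) ≤ t/10 := by
      have := mul_le_mul_of_nonneg_left h4 ht0.le
      nlinarith [this]
    have hns : 10*C ≤ (n:ℝ)^(1-2*lam/3) := hn₁ n (le_trans (le_max_left _ _) hn)
    have h23 : ((n:ℝ)^(-lam))^(2/3:ℝ) ≤ t^(2/3:ℝ) :=
      Real.rpow_le_rpow (Real.rpow_pos_of_pos hnpos _).le htlo (by norm_num)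
    have hineq : 10*C ≤ (n:ℝ) * t^(2/3:ℝ) := by
      calc 10*C ≤ (n:ℝ)^(1-2*lam/3) := hns
        _ = (n:ℝ)^(1:ℝ) * (n:ℝ)^(-lam*(2/3:ℝ)) := by
            rw [← Real.rpow_add hnpos]
            congr 1
            ring
        _ = (n:ℝ) * ((n:ℝ)^(-lam))^(2/3:ℝ) := by
            rw [Real.rpow_one, Real.rpow_mul hnpos.le]
        _ ≤ (n:ℝ) * t^(2/3:ℝ) := mul_le_mul_of_nonneg_left h23 hnpos.le
    have hfin : C*(n:ℝ)⁻¹ ≤ t^(2/3:ℝ)/10 := by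
      calc C*(n:ℝ)⁻¹ = ((n:ℝ)⁻¹*(1/10))*(10*C) := by ring
        _ ≤ ((n:ℝ)⁻¹*(1/10))*((n:ℝ)*t^(2/3:ℝ)) :=
            mul_le_mul_of_nonneg_left hineq (by positivity)
        _ = ((n:ℝ)⁻¹*(n:ℝ))*(t^(2/3:ℝ)/10) := by ring
        _ = t^(2/3:ℝ)/10 := by rw [inv_mul_cancel₀ hne, one_mul]
    have e4 : t^(2/3:ℝ) * t^(1/3:ℝ) = t := by
      rw [← Real.rpow_add ht0]
      norm_num
    have h6 : C*(n:ℝ)⁻¹*t^(1/3:ℝ) ≤ t/10 := by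
      calc C*(n:ℝ)⁻¹*t^(1/3:ℝ) ≤ (t^(2/3:ℝ)/10)*t^(1/3:ℝ) :=
            mul_le_mul_of_nonneg_right hfin hs.le
        _ = t/10 := by rw [div_mul_eq_mul_div, e4]
    have hγ_lb : (3:ℝ)/10 ≤ gammaConst m := by
      unfold gammaConst
      have hsum : 0 ≤ ∑ j ∈ Finset.range (m+1), (1:ℝ)/(Nat.factorial j) := by positivity
      have hlog2 := Real.log_two_lt_d9
      have hre : (0:ℝ) ≤ (Real.exp 1)⁻¹ := by positivity
      nlinarith [mul_nonneg hre hsum]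
    have hγt := mul_le_mul_of_nonneg_right hγ_lb ht0.le
    linarith only [h3, h5, h6, hγt, ht0]
end
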